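/- arXiv:1801.03533 — 6 statements merged into one kernel-verified Lean document; each statement's English description precedes it below -/
import Mathlib

section
/- Fix δ > 0, α > 0, and c > 0 (with c = α β^{-(1+δ)} for β > 1). For each integer k ≥ 1 define φ_k = [α^{1/(1+δ)} c^{δ/(1+δ)} (1+c)^{k−1} / B(k−1−1/(1+δ), k−1)]·[(1+c^{-1})^{δ/(1+δ)} − Σ_{j=0}^{k−1} B(j−1/(1+δ), j)(1+c)^{−j}], where B(s,j) = Γ(s+1)/(Γ(j+1)Γ(s−j+1)). Then for every integer k ≥ 1, φ_{k+1} > φ_k. (Consequently, if the Rooney Rule produces a positive expected change at k finalists, it also does so at k+1 finalists, for sufficiently large n.) -/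
open Real Finset

/-!
With `e = 1/(1+δ)` and `x = 1/(1+c)`, the numbers `b j = B(j - e, j)` are the Taylor coefficients
of `(1 - x)^(e-1) = (1 + c⁻¹)^(δ/(1+δ))` at `0`, so the bracket in `φ_{n+1}` is the tail
`∑_{j > n} b j x^j` of that series, and since `(1 + c) x = 1`,
`φ_{n+1} = α^e c^(1-e) ∑_{m ≥ 0} (b (n+m+1) / b n) x^(m+1)`.
The ratios `b (j+1) / b j = 1 - e/(j+1)` increase strictly with `j`, hence every quotient
`b (n+m+1) / b n` increases strictly with `n`, and `φ` increases termwise.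
-/

/-- Generalized binomial coefficient `B(s,j) = Γ(s+1)/(Γ(j+1)Γ(s−j+1))`. -/
noncomputable def genBinom (s : ℝ) (j : ℕ) : ℝ :=
  Real.Gamma (s + 1) / (Real.Gamma ((j : ℝ) + 1) * Real.Gamma (s - (j : ℝ) + 1))

/-- The function `φ_k` (as a function of `c = αβ^{-(1+δ)}`). -/
noncomputable def phiK (δ α c : ℝ) (k : ℕ) : ℝ :=
  α ^ (1 / (1 + δ)) * c ^ (δ / (1 + δ)) * (1 + c) ^ (k - 1) /
      genBinom ((k : ℝ) - 1 - 1 / (1 + δ)) (k - 1) *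
    ((1 + c⁻¹) ^ (δ / (1 + δ)) -
      ∑ j ∈ Finset.range k, genBinom ((j : ℝ) - 1 / (1 + δ)) j * (1 + c) ^ (-(j : ℝ)))

theorem Ring.choose_eq_descPochhammer_eval_div {K : Type*} [Field K] [CharZero K]
    (r : K) (k : ℕ) :
    Ring.choose r k = (descPochhammer K k).eval r / k.factorial := by
  rw [Ring.choose_eq_smul, ← Polynomial.aeval_eq_smeval, Polynomial.aeval_def,
    Polynomial.eval₂_eq_eval_map, descPochhammer_map, smul_eq_mul, inv_mul_eq_div]

theorem Real.Gamma_add_one_eq_mul_descPochhammer_eval {s : ℝ} {j : ℕ} (h : (j : ℝ) - 1 < s) :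
    Gamma (s + 1) = Gamma (s - j + 1) * (descPochhammer ℝ j).eval s := by
  induction j with
  | zero => simp
  | succ j ih =>
    push_cast at h
    have hsj : s - j ≠ 0 := by linarith
    rw [ih (by linarith), descPochhammer_succ_eval, Gamma_add_one hsj]
    push_cast
    ring_nf

theorem genBinom_eq_choose {s : ℝ} {j : ℕ} (h : (j : ℝ) - 1 < s) :
    genBinom s j = Ring.choose s j := by
  have hΓ : Gamma (s - j + 1) ≠ 0 := (Gamma_pos_of_pos (by linarith)).ne'
  rw [genBinom, Gamma_add_one_eq_mul_descPochhammer_eval h, Ring.choose_eq_descPochhammer_eval_div,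
    Gamma_nat_eq_factorial]
  field_simp

theorem genBinom_pos {s : ℝ} {j : ℕ} (h : (j : ℝ) - 1 < s) : 0 < genBinom s j := by
  have hj : (0 : ℝ) ≤ j := j.cast_nonneg
  exact div_pos (Gamma_pos_of_pos (by linarith))
    (mul_pos (Gamma_pos_of_pos (by linarith)) (Gamma_pos_of_pos (by linarith)))

theorem genBinom_add_one_succ {s : ℝ} (hs : s + 1 ≠ 0) (j : ℕ) :
    genBinom (s + 1) (j + 1) = (s + 1) / (j + 1) * genBinom s j := by
  have hj : (j : ℝ) + 1 ≠ 0 := by positivity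
  simp only [genBinom]
  push_cast
  rw [show s + 1 - (j + 1) + 1 = s - j + 1 by ring, Gamma_add_one hs, Gamma_add_one hj,
    mul_assoc ((j : ℝ) + 1), mul_div_mul_comm]

theorem Real.hasSum_choose_mul_pow_one_sub_rpow_neg (a : ℝ) {x : ℝ} (hx : |x| < 1) :
    HasSum (fun n : ℕ => Ring.choose (a + n - 1) n * x ^ n) ((1 - x) ^ (-a)) := by
  have hx' : x ∈ Metric.eball (0 : ℝ) 1 := by
    simpa [Metric.mem_eball, edist_dist, Real.dist_eq] using hx
  have := (one_div_one_sub_rpow_hasFPowerSeriesOnBall_zero a).hasSum hx'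
  have h1 : 0 ≤ 1 - x := by linarith [le_abs_self x]
  simpa [FormalMultilinearSeries.ofScalars_apply_eq, Real.rpow_neg h1, mul_comm] using this

theorem div_lt_div_of_strictMono_ratio {f : ℕ → ℝ} (hf : ∀ n, 0 < f n)
    (hr : StrictMono fun n => f (n + 1) / f n) (n m : ℕ) :
    f (n + m + 1) / f n < f (n + 1 + m + 1) / f (n + 1) := by
  have hsplit : ∀ i j, f (j + 1) / f i = f j / f i * (f (j + 1) / f j) := by
    intro i j
    have := (hf i).ne'; have := (hf j).ne'
    field_simp
  induction m with
  | zero => exact hr (Nat.lt_succ_self n)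
  | succ m ih =>
    calc f (n + (m + 1) + 1) / f n
        = f (n + m + 1) / f n * (f (n + m + 1 + 1) / f (n + m + 1)) := hsplit n (n + m + 1)
      _ < f (n + 1 + m + 1) / f (n + 1) * (f (n + 1 + m + 1 + 1) / f (n + 1 + m + 1)) :=
          mul_lt_mul'' ih (hr (by omega)) (div_pos (hf _) (hf _)).le (div_pos (hf _) (hf _)).le
      _ = f (n + 1 + (m + 1) + 1) / f (n + 1) := (hsplit (n + 1) (n + 1 + m + 1)).symm

noncomputable def oneSubRpowCoeff (e : ℝ) (j : ℕ) : ℝ := genBinom ((j : ℝ) - e) j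

section oneSubRpowCoeff

variable {e : ℝ}

theorem hasSum_oneSubRpowCoeff_mul_pow (he : e < 1) {x : ℝ} (hx : |x| < 1) :
    HasSum (fun j : ℕ => oneSubRpowCoeff e j * x ^ j) ((1 - x) ^ (e - 1)) := by
  have h := Real.hasSum_choose_mul_pow_one_sub_rpow_neg (1 - e) hx
  rw [neg_sub] at h
  convert h using 3 with j
  rw [oneSubRpowCoeff, genBinom_eq_choose (by linarith)]
  ring_nf

theorem oneSubRpowCoeff_pos (he : e < 1) (j : ℕ) : 0 < oneSubRpowCoeff e j :=
  genBinom_pos (by linarith)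

theorem oneSubRpowCoeff_succ_div (he : e < 1) (j : ℕ) :
    oneSubRpowCoeff e (j + 1) / oneSubRpowCoeff e j = 1 - e / (j + 1) := by
  have hj : (j : ℝ) + 1 ≠ 0 := by positivity
  rw [oneSubRpowCoeff, oneSubRpowCoeff, Nat.cast_succ,
    show (j : ℝ) + 1 - e = (j - e) + 1 by ring, genBinom_add_one_succ (by linarith),
    mul_div_cancel_right₀ _ (genBinom_pos (by linarith)).ne']
  field_simp
  ring

theorem strictMono_oneSubRpowCoeff_ratio (he0 : 0 < e) (he1 : e < 1) :
    StrictMono fun j => oneSubRpowCoeff e (j + 1) / oneSubRpowCoeff e j := by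
  refine strictMono_nat_of_lt_succ fun j => ?_
  simp only [oneSubRpowCoeff_succ_div he1]
  push_cast
  gcongr 1 - e / ?_
  linarith

end oneSubRpowCoeff

noncomputable def phiKSummand (δ α c : ℝ) (n m : ℕ) : ℝ :=
  α ^ (1 / (1 + δ)) * c ^ (δ / (1 + δ)) *
    (oneSubRpowCoeff (1 / (1 + δ)) (n + m + 1) / oneSubRpowCoeff (1 / (1 + δ)) n) *
    (1 + c)⁻¹ ^ (m + 1)

theorem one_add_inv_rpow {c : ℝ} (hc : 0 < c) (a : ℝ) :
    (1 + c⁻¹) ^ a = (1 - (1 + c)⁻¹) ^ (-a) := by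
  have h : 1 - (1 + c)⁻¹ = (1 + c⁻¹)⁻¹ := by field_simp; ring
  rw [h, rpow_neg (by positivity), inv_rpow (by positivity), inv_inv]

theorem one_div_one_add_mem_Ioo {δ : ℝ} (hδ : 0 < δ) : 1 / (1 + δ) ∈ Set.Ioo 0 1 :=
  ⟨by positivity, by rw [div_lt_one (by linarith)]; linarith⟩

theorem hasSum_phiKSummand {δ α c : ℝ} (hδ : 0 < δ) (hc : 0 < c) (n : ℕ) :
    HasSum (phiKSummand δ α c n) (phiK δ α c (n + 1)) := by
  set e := 1 / (1 + δ)
  set x := (1 + c)⁻¹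
  obtain ⟨-, he1⟩ := one_div_one_add_mem_Ioo hδ
  have hx0 : 0 < x := by positivity
  have hx1 : x < 1 := inv_lt_one_of_one_lt₀ (by linarith)
  have hxc : (1 + c) * x = 1 := mul_inv_cancel₀ (by linarith)
  have hbase : (1 + c⁻¹) ^ (δ / (1 + δ)) = (1 - x) ^ (e - 1) := by
    rw [one_add_inv_rpow hc, show -(δ / (1 + δ)) = e - 1 by simp only [e]; field_simp; ring]
  have hpow : ∀ j : ℕ, (1 + c) ^ (-(j : ℝ)) = x ^ j := fun j => by
    rw [rpow_neg (by linarith), rpow_natCast, inv_pow]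
  have htail := (hasSum_nat_add_iff' (n + 1)).mpr
    (hasSum_oneSubRpowCoeff_mul_pow he1 (abs_lt.mpr ⟨by linarith, hx1⟩))
  have hphi : phiK δ α c (n + 1) = α ^ e * c ^ (δ / (1 + δ)) * (1 + c) ^ n /
      oneSubRpowCoeff e n * ((1 - x) ^ (e - 1) -
        ∑ j ∈ range (n + 1), oneSubRpowCoeff e j * x ^ j) := by
    simp only [phiK, hbase, hpow, Nat.add_sub_cancel, oneSubRpowCoeff, e]
    push_cast
    ring_nf
  rw [hphi]
  refine (htail.mul_left _).congr_fun fun m => ?_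
  unfold phiKSummand
  have hxn : (1 + c) ^ n * x ^ n = 1 := by rw [← mul_pow, hxc, one_pow]
  rw [show m + (n + 1) = n + m + 1 by omega]
  linear_combination -(α ^ e * c ^ (δ / (1 + δ)) * oneSubRpowCoeff e (n + m + 1) /
    oneSubRpowCoeff e n * x ^ (m + 1)) * hxn

theorem phiKSummand_lt_succ {δ α c : ℝ} (hδ : 0 < δ) (hα : 0 < α) (hc : 0 < c) (n m : ℕ) :
    phiKSummand δ α c n m < phiKSummand δ α c (n + 1) m := by
  obtain ⟨he0, he1⟩ := one_div_one_add_mem_Ioo hδ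
  have hratio := div_lt_div_of_strictMono_ratio (oneSubRpowCoeff_pos he1)
    (strictMono_oneSubRpowCoeff_ratio he0 he1) n m
  unfold phiKSummand
  gcongr

/-- `φ_{k+1} > φ_k` for every integer `k ≥ 1`: increasing the number of
finalists cannot make the Rooney Rule go from beneficial to harmful. -/
theorem phiK_strict_mono_in_k (δ α c : ℝ) (hδ : 0 < δ) (hα : 0 < α) (hc : 0 < c) :
    ∀ k : ℕ, 1 ≤ k → phiK δ α c k < phiK δ α c (k + 1) := by
  intro k hk
  obtain ⟨n, rfl⟩ := Nat.exists_eq_add_of_le' hk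
  have hterm := phiKSummand_lt_succ hδ hα hc n
  exact hasSum_lt (fun m => (hterm m).le) (hterm 0)
    (hasSum_phiKSummand hδ hc n) (hasSum_phiKSummand hδ hc (n + 1))
end

section
/- Fix δ > 0, α with 0 < α ≤ 1, β > 1, and set c = α β^{-(1+δ)}. Then there exist a > 0 and n₀ such that for all n ≥ n₀ with αn a positive integer and all integers k with 1 ≤ k ≤ (1−c) ln n, the quantity C_n = ∫₁^∞ y f_{(n-k+1:n)}(y) F_{(αn:αn)}(βy) dy and the quantity D_n = (1 + α β^{-(1+δ)})^{−(k − 1/(1+δ))}·∫₁^∞ y f_{(n-k+1:n)}(y) dy satisfy C_n/D_n ≤ 1 + a(ln n)²/n and D_n/C_n ≤ 1 + a(ln n)²/n. -/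
open MeasureTheory Real Finset

/-- Density of the `p`-th smallest of `m` i.i.d. samples from the power law
distribution with `P(Z ≥ t) = t^{-(1+δ)}` on `[1,∞)`. -/
noncomputable def plPdf (δ : ℝ) (p m : ℕ) (x : ℝ) : ℝ :=
  if 1 ≤ x then
    (1 + δ) * ((m : ℝ) - (p : ℝ) + 1) * (m.choose (p - 1) : ℝ) *
      (1 - x ^ (-(1 + δ))) ^ (p - 1) * (x ^ (-(1 + δ))) ^ (m - p + 1) * x⁻¹
  else 0

/-- CDF of the `p`-th smallest of `m` i.i.d. samples from the power law
distribution with `P(Z ≥ t) = t^{-(1+δ)}` on `[1,∞)`. -/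
noncomputable def plCdf (δ : ℝ) (p m : ℕ) (x : ℝ) : ℝ :=
  if 1 ≤ x then
    ∑ j ∈ Finset.Icc p m,
      (m.choose j : ℝ) * (1 - x ^ (-(1 + δ))) ^ j * (x ^ (-(1 + δ))) ^ (m - j)
  else 0

/-!
Substituting `u = y ^ (-(1 + δ))` turns both integrals into `(1 + δ) k C(n, k)` times integrals
over `u ∈ (0, 1)`: the expectation becomes `G q` with `G Q = ∫ (1 - u) ^ Q u ^ k` and `q = n - k`,
and `C_n` becomes `H = ∫ (1 - u) ^ q u ^ k (1 - b u) ^ m` with `b = β ^ (-(1 + δ))`, `b m = c n`.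

Integration by parts gives `G (Q + 1) (Q + 1 + A) = (Q + 1) G Q` with `A = k - 1 / (1 + δ)`, so
`G Q · Q ^ A` is nearly constant and `G (q + M) ≈ (q / (q + M)) ^ A G q`.

By Bernoulli `(1 - u) ^ ⌈c n⌉ ≤ (1 - b u) ^ m`, hence `H ≥ G (q + ⌈c n⌉)`. Conversely
`(1 - b u) ^ m ≤ exp (-c n u) ≤ (1 - u) ^ ⌊c n⌋ exp (2 c n u ^ 2)`, which is sharp for
`u ≤ 12 log n / n`, while for larger `u` the integrand carries a factor `(1 - u) ^ (q / 2) ≤ n⁻³`;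
so `H ≤ G (q + ⌊c n⌋) + O((log n) ^ 2 / n) G q`. As `q + c n = (1 + c) q + O(k)` with
`k ≤ log n`, both bounds are `(1 + c) ^ (-A) G q · (1 + O((log n) ^ 2 / n))`.
-/

lemma exp_le_one_add_two_mul {x : ℝ} (h0 : 0 ≤ x) (h1 : x ≤ 1 / 2) : exp x ≤ 1 + 2 * x :=
  calc exp x ≤ 1 / (1 - x) := exp_bound_div_one_sub_of_interval h0 (by linarith)
    _ ≤ 1 + 2 * x := by rw [div_le_iff₀ (by linarith)]; nlinarith

lemma exp_sub_sq_le_one_add {s : ℝ} (hs : 0 ≤ s) : exp (s - s ^ 2) ≤ 1 + s := by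
  rw [show s - s ^ 2 = -(s ^ 2 - s) by ring, exp_neg, inv_le_iff_one_le_mul₀ (exp_pos _)]
  have := mul_le_mul_of_nonneg_left (add_one_le_exp (s ^ 2 - s)) (by linarith : 0 ≤ 1 + s)
  nlinarith [pow_nonneg hs 3]

lemma one_sub_pow_le_exp_neg {u : ℝ} (hu : u ≤ 1) (j : ℕ) : (1 - u) ^ j ≤ exp (-(u * j)) :=
  calc (1 - u) ^ j ≤ exp (-u) ^ j := pow_le_pow_left₀ (by linarith) (one_sub_le_exp_neg u) j
    _ = exp (-(u * j)) := by rw [← exp_nat_mul]; ring_nf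

lemma exp_neg_mul_le_one_sub_pow_mul_exp {u C : ℝ} {M : ℕ} (hu0 : 0 ≤ u) (hu : u ≤ 1 / 2)
    (hM : M ≤ C) : exp (-(C * u)) ≤ (1 - u) ^ M * exp (2 * C * u ^ 2) := by
  have hu1 : 0 < 1 - u := by linarith
  have hlog : -(u + 2 * u ^ 2) ≤ log (1 - u) := by
    refine le_trans ?_ (one_sub_inv_le_log_of_pos hu1)
    rw [neg_le_sub_iff_le_add, inv_le_iff_one_le_mul₀ hu1]
    nlinarith [mul_le_mul_of_nonneg_left hu (sq_nonneg u)]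
  rw [← exp_log (pow_pos hu1 M), log_pow, ← exp_add]
  gcongr
  nlinarith [mul_le_mul_of_nonneg_left hlog (Nat.cast_nonneg M : (0 : ℝ) ≤ M)]

lemma rpow_le_rpow_mul_exp {x y A : ℝ} (hx : 0 < x) (hy : 0 < y) (hA : 0 ≤ A) :
    y ^ A ≤ x ^ A * exp (A * (y - x) / x) := by
  have hlog : log (y / x) * A ≤ A * (y - x) / x := by
    have := mul_le_mul_of_nonneg_right (log_le_sub_one_of_pos (div_pos hy hx)) hA
    rw [show (y / x - 1) * A = A * (y - x) / x by field_simp] at this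
    exact this
  calc y ^ A = x ^ A * (y / x) ^ A := by
        rw [← mul_rpow hx.le (div_pos hy hx).le, mul_div_cancel₀ _ hx.ne']
    _ ≤ x ^ A * exp (A * (y - x) / x) := by
        rw [rpow_def_of_pos (div_pos hy hx)]; gcongr

lemma rpow_mul_add_le_rpow_mul {x A : ℝ} (hx : 0 < x) (hA : 0 ≤ A) :
    x ^ A * (x + 1 + A) ≤ (x + 1) ^ A * (x + 1) := by
  have hlog : 1 / (x + 1) ≤ log ((x + 1) / x) := by
    refine le_trans (le_of_eq ?_) (one_sub_inv_le_log_of_pos (by positivity))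
    field_simp; ring
  have hexp : 1 + A / (x + 1) ≤ ((x + 1) / x) ^ A := by
    rw [rpow_def_of_pos (by positivity)]
    have := mul_le_mul_of_nonneg_right hlog hA
    have := add_one_le_exp (log ((x + 1) / x) * A)
    rw [div_eq_mul_one_div A]
    linarith
  calc x ^ A * (x + 1 + A) = x ^ A * (1 + A / (x + 1)) * (x + 1) := by field_simp
    _ ≤ x ^ A * ((x + 1) / x) ^ A * (x + 1) := by gcongr
    _ = (x + 1) ^ A * (x + 1) := by
        rw [← mul_rpow hx.le (by positivity), mul_div_cancel₀ _ hx.ne']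

lemma rpow_mul_le_rpow_mul_add_mul_exp {x A : ℝ} (hx : 0 < x) (hA : 0 ≤ A) :
    (x + 1) ^ A * x ≤ x ^ A * (x + A) * exp ((A / x) ^ 2) := by
  have hexp : ((x + 1) / x) ^ A ≤ (1 + A / x) * exp ((A / x) ^ 2) := by
    have hlog : log ((x + 1) / x) * A ≤ A / x := by
      have := mul_le_mul_of_nonneg_right
        (log_le_sub_one_of_pos (by positivity : 0 < (x + 1) / x)) hA
      rw [show ((x + 1) / x - 1) * A = A / x by field_simp; ring] at this
      exact this
    calc ((x + 1) / x) ^ A ≤ exp (A / x) := by rw [rpow_def_of_pos (by positivity)]; gcongr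
      _ = exp (A / x - (A / x) ^ 2) * exp ((A / x) ^ 2) := by rw [← exp_add]; ring_nf
      _ ≤ (1 + A / x) * exp ((A / x) ^ 2) := by
          gcongr; exact exp_sub_sq_le_one_add (by positivity)
  calc (x + 1) ^ A * x = x ^ A * ((x + 1) / x) ^ A * x := by
        rw [← mul_rpow hx.le (by positivity), mul_div_cancel₀ _ hx.ne']
    _ ≤ x ^ A * ((1 + A / x) * exp ((A / x) ^ 2)) * x := by gcongr
    _ = x ^ A * (x + A) * exp ((A / x) ^ 2) := by field_simp

lemma one_sub_pow_le_one_sub_mul_pow {u b : ℝ} {m M : ℕ} (hu0 : 0 ≤ u) (hu1 : u < 1)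
    (hb0 : 0 ≤ b) (hb1 : b ≤ 1) (hM : b * m ≤ M) : (1 - u) ^ M ≤ (1 - b * u) ^ m :=
  calc (1 - u) ^ M = (1 - u) ^ (M : ℝ) := (rpow_natCast _ _).symm
    _ ≤ (1 - u) ^ (b * m) := rpow_le_rpow_of_exponent_ge (by linarith) (by linarith) hM
    _ = ((1 + (-u)) ^ b) ^ m := by rw [rpow_mul (by linarith), rpow_natCast, ← sub_eq_add_neg]
    _ ≤ (1 - b * u) ^ m := by
        gcongr
        · positivity [show (0 : ℝ) ≤ 1 + -u by linarith]
        · simpa [← sub_eq_add_neg] using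
            rpow_one_add_le_one_add_mul_self (s := -u) (by linarith) hb0 hb1

lemma one_sub_pow_mul_one_sub_mul_pow_le {u u₀ b : ℝ} {q m M Q' : ℕ} (hu0 : 0 ≤ u) (hu1 : u ≤ 1)
    (hb0 : 0 ≤ b) (hb1 : b ≤ 1) (hM : M ≤ b * m) (hu₀ : u₀ ≤ 1 / 2) (hQ' : Q' ≤ q) :
    (1 - u) ^ q * (1 - b * u) ^ m
      ≤ exp (2 * (b * m) * u₀ ^ 2) * (1 - u) ^ (q + M) + (1 - u₀) ^ (q - Q') * (1 - u) ^ Q' := by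
  have hbu : 0 ≤ 1 - b * u := by nlinarith
  rcases le_or_gt u u₀ with hsmall | hlarge
  · have hm : (1 - b * u) ^ m ≤ (1 - u) ^ M * exp (2 * (b * m) * u₀ ^ 2) :=
      calc (1 - b * u) ^ m ≤ exp (-(b * m * u)) := by
            simpa [mul_right_comm] using one_sub_pow_le_exp_neg (by nlinarith) m
        _ ≤ (1 - u) ^ M * exp (2 * (b * m) * u ^ 2) :=
            exp_neg_mul_le_one_sub_pow_mul_exp hu0 (by linarith) hM
        _ ≤ (1 - u) ^ M * exp (2 * (b * m) * u₀ ^ 2) := by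
            gcongr
    have htail : 0 ≤ (1 - u₀) ^ (q - Q') * (1 - u) ^ Q' :=
      mul_nonneg (pow_nonneg (by linarith) _) (pow_nonneg (by linarith) _)
    calc (1 - u) ^ q * (1 - b * u) ^ m ≤ (1 - u) ^ q * ((1 - u) ^ M * exp (2 * (b * m) * u₀ ^ 2)) :=
          mul_le_mul_of_nonneg_left hm (pow_nonneg (by linarith) _)
      _ = exp (2 * (b * m) * u₀ ^ 2) * (1 - u) ^ (q + M) := by ring
      _ ≤ _ := le_add_of_nonneg_right htail
  · have hm : (1 - b * u) ^ m ≤ 1 := pow_le_one₀ hbu (by nlinarith)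
    calc (1 - u) ^ q * (1 - b * u) ^ m ≤ (1 - u) ^ (q - Q') * (1 - u) ^ Q' := by
          rw [← pow_add, Nat.sub_add_cancel hQ']
          exact mul_le_of_le_one_right (pow_nonneg (by linarith) _) hm
      _ ≤ (1 - u₀) ^ (q - Q') * (1 - u) ^ Q' := by
          gcongr
      _ ≤ _ := le_add_of_nonneg_left (by positivity)

section BetaRecursion

variable {G : ℕ → ℝ} {A : ℝ}

lemma mul_rpow_le_mul_rpow_of_rec (hG : ∀ Q, 0 ≤ G Q) (hA : 0 ≤ A)
    (hrec : ∀ Q : ℕ, G (Q + 1) * (Q + 1 + A) = (Q + 1) * G Q)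
    {Q R : ℕ} (hQ : 1 ≤ Q) (hQR : Q ≤ R) : G Q * (Q : ℝ) ^ A ≤ G R * (R : ℝ) ^ A := by
  induction R, hQR using Nat.le_induction with
  | base => rfl
  | succ P hQP ih =>
    have hP : (0 : ℝ) < P := by exact_mod_cast hQ.trans hQP
    refine ih.trans (le_of_mul_le_mul_right ?_ (by positivity : (0 : ℝ) < P + 1 + A))
    calc G P * (P : ℝ) ^ A * (P + 1 + A) = G P * ((P : ℝ) ^ A * (P + 1 + A)) := by ring
      _ ≤ G P * (((P : ℝ) + 1) ^ A * (P + 1)) :=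
          mul_le_mul_of_nonneg_left (rpow_mul_add_le_rpow_mul hP hA) (hG P)
      _ = G (P + 1) * ((P + 1 : ℕ) : ℝ) ^ A * (P + 1 + A) := by
          push_cast; linear_combination (((P : ℝ) + 1) ^ A) * (hrec P).symm

lemma mul_rpow_le_mul_rpow_mul_exp_of_rec (hG : ∀ Q, 0 ≤ G Q) (hA : 0 ≤ A)
    (hrec : ∀ Q : ℕ, G (Q + 1) * (Q + 1 + A) = (Q + 1) * G Q) (Q M : ℕ) :
    G (Q + M) * ((Q : ℝ) + M + 1) ^ A
      ≤ G Q * ((Q : ℝ) + 1) ^ A * exp (A ^ 2 * M / ((Q : ℝ) + 1) ^ 2) := by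
  induction M with
  | zero => simp
  | succ M ih =>
    set x : ℝ := Q + M + 1
    have hx : 0 < x := by positivity
    have hstep : G (Q + M + 1) * (x + 1) ^ A ≤ G (Q + M) * x ^ A * exp ((A / x) ^ 2) := by
      refine le_of_mul_le_mul_right ?_ (by positivity : 0 < x + A)
      have hrec' : G (Q + M + 1) * (x + A) = x * G (Q + M) := by
        simpa [x, add_assoc] using hrec (Q + M)
      calc G (Q + M + 1) * (x + 1) ^ A * (x + A) = G (Q + M) * ((x + 1) ^ A * x) := by
            linear_combination ((x + 1) ^ A) * hrec'
        _ ≤ G (Q + M) * (x ^ A * (x + A) * exp ((A / x) ^ 2)) :=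
            mul_le_mul_of_nonneg_left (rpow_mul_le_rpow_mul_add_mul_exp hx hA) (hG _)
        _ = _ := by ring
    have hexp : (A / x) ^ 2 ≤ A ^ 2 / ((Q : ℝ) + 1) ^ 2 := by
      rw [div_pow]; gcongr; simp [x]
    calc G (Q + (M + 1)) * ((Q : ℝ) + ((M + 1 : ℕ) : ℝ) + 1) ^ A
        = G (Q + M + 1) * (x + 1) ^ A := by simp only [x, ← add_assoc]; push_cast; ring_nf
      _ ≤ G (Q + M) * x ^ A * exp ((A / x) ^ 2) := hstep
      _ ≤ G Q * ((Q : ℝ) + 1) ^ A * exp (A ^ 2 * M / ((Q : ℝ) + 1) ^ 2)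
            * exp (A ^ 2 / ((Q : ℝ) + 1) ^ 2) :=
          mul_le_mul ih (exp_le_exp.2 hexp) (exp_pos _).le
            (mul_nonneg (mul_nonneg (hG _) (by positivity)) (exp_pos _).le)
      _ = _ := by rw [mul_assoc, ← exp_add]; push_cast; ring_nf

lemma le_rpow_mul_exp_mul_of_rec (hG : ∀ Q, 0 ≤ G Q) (hA : 0 ≤ A)
    (hrec : ∀ Q : ℕ, G (Q + 1) * (Q + 1 + A) = (Q + 1) * G Q) {q : ℕ} (hq : 1 ≤ q) (M : ℕ)
    {κ : ℝ} (hκ : 0 < κ) :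
    G q ≤ κ ^ A * exp (A * (q + M - κ * q) / (κ * q)) * G (q + M) := by
  have hq0 : (0 : ℝ) < q := by exact_mod_cast hq
  have h1 := mul_rpow_le_mul_rpow_of_rec hG hA hrec hq (Nat.le_add_right q M)
  have h2 := rpow_le_rpow_mul_exp (mul_pos hκ hq0) (y := q + M) (by positivity) hA
  refine le_of_mul_le_mul_right ?_ (rpow_pos_of_pos hq0 A)
  calc G q * (q : ℝ) ^ A ≤ G (q + M) * ((q : ℝ) + M) ^ A := by push_cast at h1; exact h1
    _ ≤ G (q + M) * ((κ * q) ^ A * exp (A * (q + M - κ * q) / (κ * q))) :=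
        mul_le_mul_of_nonneg_left h2 (hG _)
    _ = _ := by rw [mul_rpow hκ.le hq0.le]; ring

lemma rpow_mul_le_exp_mul_of_rec (hG : ∀ Q, 0 ≤ G Q) (hA : 0 ≤ A)
    (hrec : ∀ Q : ℕ, G (Q + 1) * (Q + 1 + A) = (Q + 1) * G Q) (q M : ℕ) {κ : ℝ} (hκ : 0 < κ) :
    κ ^ A * G (q + M)
      ≤ exp (A * (κ * (q + 1) - (q + M + 1)) / (q + M + 1) + A ^ 2 * M / ((q : ℝ) + 1) ^ 2)
        * G q := by
  have h1 := mul_rpow_le_mul_rpow_mul_exp_of_rec hG hA hrec q M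
  have h2 := rpow_le_rpow_mul_exp (x := q + M + 1) (y := κ * (q + 1)) (by positivity)
    (by positivity) hA
  refine le_of_mul_le_mul_right ?_ (by positivity : (0 : ℝ) < ((q : ℝ) + M + 1) ^ A)
  calc κ ^ A * G (q + M) * ((q : ℝ) + M + 1) ^ A
      ≤ κ ^ A * (G q * ((q : ℝ) + 1) ^ A * exp (A ^ 2 * M / ((q : ℝ) + 1) ^ 2)) := by
        rw [mul_assoc]; exact mul_le_mul_of_nonneg_left h1 (by positivity)
    _ = G q * exp (A ^ 2 * M / ((q : ℝ) + 1) ^ 2) * (κ * (q + 1)) ^ A := by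
        rw [mul_rpow hκ.le (by positivity)]; ring
    _ ≤ G q * exp (A ^ 2 * M / ((q : ℝ) + 1) ^ 2)
          * (((q : ℝ) + M + 1) ^ A * exp (A * (κ * (q + 1) - (q + M + 1)) / (q + M + 1))) := by
        gcongr; exact mul_nonneg (hG q) (exp_pos _).le
    _ = _ := by rw [exp_add]; ring

end BetaRecursion

/-- Under `u = y ^ (-(1 + δ))` this is `B(Q + 1, k - 1 / (1 + δ)) / (1 + δ)`. -/
noncomputable def plBeta (δ : ℝ) (k Q : ℕ) : ℝ :=
  ∫ y in Set.Ioi (1 : ℝ), (1 - y ^ (-(1 + δ))) ^ Q * (y ^ (-(1 + δ))) ^ k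

noncomputable def plBetaWeighted (δ b : ℝ) (k q m : ℕ) : ℝ :=
  ∫ y in Set.Ioi (1 : ℝ),
    (1 - y ^ (-(1 + δ))) ^ q * (y ^ (-(1 + δ))) ^ k * (1 - b * y ^ (-(1 + δ))) ^ m

lemma rpow_neg_one_add_mem_Ioo {δ y : ℝ} (hδ : 0 < δ) (hy : 1 < y) :
    y ^ (-(1 + δ)) ∈ Set.Ioo (0 : ℝ) 1 :=
  ⟨by positivity, rpow_lt_one_of_one_lt_of_neg hy (by linarith)⟩

lemma integrableOn_comp_rpow_neg {δ : ℝ} (hδ : 0 < δ) {f : ℝ → ℝ} (hf : Continuous f)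
    (hbound : ∀ u ∈ Set.Ioo (0 : ℝ) 1, |f u| ≤ u) :
    IntegrableOn (fun y => f (y ^ (-(1 + δ)))) (Set.Ioi 1) := by
  have hcont : ContinuousOn (fun y : ℝ => y ^ (-(1 + δ))) (Set.Ioi 1) :=
    continuousOn_id.rpow_const fun y hy => Or.inl (zero_lt_one.trans hy).ne'
  refine (integrableOn_Ioi_rpow_of_lt (a := -(1 + δ)) (by linarith) one_pos).mono'
    ((hf.comp_continuousOn hcont).aestronglyMeasurable measurableSet_Ioi) ?_
  filter_upwards [ae_restrict_mem measurableSet_Ioi] with y hy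
  exact hbound _ (rpow_neg_one_add_mem_Ioo hδ hy)

lemma setIntegral_Ioi_pos {a : ℝ} {f : ℝ → ℝ} (hf : IntegrableOn f (Set.Ioi a))
    (hpos : ∀ y ∈ Set.Ioi a, 0 < f y) : 0 < ∫ y in Set.Ioi a, f y := by
  rw [setIntegral_pos_iff_support_of_nonneg_ae
    (ae_restrict_of_forall_mem measurableSet_Ioi fun y hy => (hpos y hy).le) hf,
    (Set.inter_eq_right.2 fun y hy => (hpos y hy).ne' : Function.support f ∩ _ = _)]
  simp

section PowerLaw

variable {δ : ℝ} {k : ℕ}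

lemma one_sub_pow_mul_pow_mem_Icc {u : ℝ} (hu : u ∈ Set.Ioo (0 : ℝ) 1) (hk : 1 ≤ k) (Q : ℕ) :
    (1 - u) ^ Q * u ^ k ∈ Set.Icc 0 u := by
  obtain ⟨hu0, hu1⟩ := hu
  have h1 : (1 - u) ^ Q ≤ 1 := pow_le_one₀ (by linarith) (by linarith)
  have h2 : u ^ k ≤ u := pow_le_of_le_one hu0.le hu1.le (by omega)
  exact ⟨mul_nonneg (pow_nonneg (by linarith) Q) (by positivity), by nlinarith [pow_pos hu0 k]⟩

lemma integrableOn_plBeta (hδ : 0 < δ) (hk : 1 ≤ k) (Q : ℕ) :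
    IntegrableOn (fun y : ℝ => (1 - y ^ (-(1 + δ))) ^ Q * (y ^ (-(1 + δ))) ^ k)
      (Set.Ioi 1) :=
  integrableOn_comp_rpow_neg hδ (f := fun u => (1 - u) ^ Q * u ^ k) (by fun_prop)
    fun u hu => by
      obtain ⟨h0, h1⟩ := one_sub_pow_mul_pow_mem_Icc hu hk Q
      rwa [abs_of_nonneg h0]

lemma integrableOn_plBetaWeighted (hδ : 0 < δ) {b : ℝ} (hb0 : 0 ≤ b) (hb1 : b ≤ 1)
    (hk : 1 ≤ k) (q m : ℕ) :
    IntegrableOn (fun y : ℝ =>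
      (1 - y ^ (-(1 + δ))) ^ q * (y ^ (-(1 + δ))) ^ k * (1 - b * y ^ (-(1 + δ))) ^ m)
      (Set.Ioi 1) :=
  integrableOn_comp_rpow_neg hδ (f := fun u => (1 - u) ^ q * u ^ k * (1 - b * u) ^ m)
    (by fun_prop) fun u hu => by
      obtain ⟨h0, h1⟩ := one_sub_pow_mul_pow_mem_Icc hu hk q
      have hbu : 0 ≤ 1 - b * u := by nlinarith [hu.2]
      have hpow : (1 - b * u) ^ m ≤ 1 := pow_le_one₀ hbu (by nlinarith [hu.1])
      rw [abs_of_nonneg (mul_nonneg h0 (pow_nonneg hbu m))]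
      nlinarith [pow_nonneg hbu m]

lemma plBeta_pos (hδ : 0 < δ) (hk : 1 ≤ k) (Q : ℕ) : 0 < plBeta δ k Q :=
  setIntegral_Ioi_pos (integrableOn_plBeta hδ hk Q) fun y hy => by
    have hu := rpow_neg_one_add_mem_Ioo hδ hy
    have : 0 < 1 - y ^ (-(1 + δ)) := by linarith [hu.2]
    have := hu.1
    positivity

lemma hasDerivAt_plBeta_primitive (Q : ℕ) {y : ℝ} (hy : 0 < y) :
    HasDerivAt (fun y : ℝ => (1 - y ^ (-(1 + δ))) ^ (Q + 1) * y ^ (1 - (1 + δ) * k))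
      ((Q + 1) * (1 + δ) * ((1 - y ^ (-(1 + δ))) ^ Q * (y ^ (-(1 + δ))) ^ k)
        + (1 - (1 + δ) * (k + Q + 1))
          * ((1 - y ^ (-(1 + δ))) ^ (Q + 1) * (y ^ (-(1 + δ))) ^ k)) y := by
  have hu := ((hasDerivAt_rpow_const (p := -(1 + δ)) (Or.inl hy.ne')).const_sub 1).fun_pow (Q + 1)
  have hw := hasDerivAt_rpow_const (x := y) (p := 1 - (1 + δ) * k) (Or.inl hy.ne')
  refine (hu.fun_mul hw).congr_deriv ?_
  have hpow : (y ^ (-(1 + δ))) ^ k = y ^ (-(1 + δ) * k) := by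
    rw [← rpow_natCast, ← rpow_mul hy.le]
  have h1 : y ^ (-(1 + δ) - 1) * y ^ (1 - (1 + δ) * k) = y ^ (-(1 + δ)) * (y ^ (-(1 + δ))) ^ k := by
    rw [hpow, ← rpow_add hy, ← rpow_add hy]; ring_nf
  have h2 : y ^ (1 - (1 + δ) * k - 1) = (y ^ (-(1 + δ))) ^ k := by
    rw [hpow]; ring_nf
  rw [Nat.add_sub_cancel]
  push_cast
  linear_combination ((Q + 1) * (1 + δ) * (1 - y ^ (-(1 + δ))) ^ Q) * h1
    + ((1 - y ^ (-(1 + δ))) ^ (Q + 1) * (1 - (1 + δ) * k)) * h2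

lemma plBeta_succ (hδ : 0 < δ) (hk : 1 ≤ k) (Q : ℕ) :
    plBeta δ k (Q + 1) * (Q + 1 + (k - 1 / (1 + δ))) = (Q + 1) * plBeta δ k Q := by
  have hk' : (1 : ℝ) ≤ k := by exact_mod_cast hk
  have hFTC := integral_Ioi_of_hasDerivAt_of_tendsto'
    (fun y hy => hasDerivAt_plBeta_primitive (δ := δ) (k := k) Q (zero_lt_one.trans_le hy))
    (((integrableOn_plBeta hδ hk Q).const_mul _).add
      ((integrableOn_plBeta hδ hk (Q + 1)).const_mul _))
    (by
      have hp := tendsto_rpow_neg_atTop (y := 1 + δ) (by linarith)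
      have hw := tendsto_rpow_neg_atTop (y := (1 + δ) * k - 1) (by nlinarith)
      simpa using ((tendsto_const_nhds.sub hp).pow (Q + 1)).mul hw)
  rw [integral_add ((integrableOn_plBeta hδ hk Q).const_mul _)
    ((integrableOn_plBeta hδ hk (Q + 1)).const_mul _), integral_const_mul,
    integral_const_mul] at hFTC
  simp only [one_rpow, sub_self, zero_pow (Nat.succ_ne_zero Q), zero_mul] at hFTC
  rw [← plBeta, ← plBeta] at hFTC
  field_simp
  linarith

lemma plBeta_le_plBetaWeighted {b : ℝ} (hδ : 0 < δ) (hb0 : 0 ≤ b) (hb1 : b ≤ 1) (hk : 1 ≤ k)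
    {q m M : ℕ} (hM : b * m ≤ M) : plBeta δ k (q + M) ≤ plBetaWeighted δ b k q m := by
  refine setIntegral_mono_on (integrableOn_plBeta hδ hk _)
    (integrableOn_plBetaWeighted hδ hb0 hb1 hk q m) measurableSet_Ioi fun y hy => ?_
  obtain ⟨hu0, hu1⟩ := rpow_neg_one_add_mem_Ioo hδ hy
  have h := one_sub_pow_le_one_sub_mul_pow hu0.le hu1 hb0 hb1 hM
  rw [pow_add, mul_right_comm]
  exact mul_le_mul_of_nonneg_left h (mul_nonneg (pow_nonneg (by linarith) _) (by positivity))

lemma plBetaWeighted_le {b : ℝ} (hδ : 0 < δ) (hb0 : 0 ≤ b) (hb1 : b ≤ 1) (hk : 1 ≤ k)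
    {q m M Q' : ℕ} {u₀ : ℝ} (hM : M ≤ b * m) (hu₀ : u₀ ≤ 1 / 2) (hQ' : Q' ≤ q) :
    plBetaWeighted δ b k q m
      ≤ exp (2 * (b * m) * u₀ ^ 2) * plBeta δ k (q + M) + (1 - u₀) ^ (q - Q') * plBeta δ k Q' := by
  rw [plBeta, plBeta, ← integral_const_mul, ← integral_const_mul,
    ← integral_add ((integrableOn_plBeta hδ hk _).const_mul _)
      ((integrableOn_plBeta hδ hk _).const_mul _)]
  refine setIntegral_mono_on (integrableOn_plBetaWeighted hδ hb0 hb1 hk q m)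
    (((integrableOn_plBeta hδ hk _).const_mul _).add ((integrableOn_plBeta hδ hk _).const_mul _))
    measurableSet_Ioi fun y hy => ?_
  obtain ⟨hu0, hu1⟩ := rpow_neg_one_add_mem_Ioo hδ hy
  have h := mul_le_mul_of_nonneg_right
    (one_sub_pow_mul_one_sub_mul_pow_le hu0.le hu1.le hb0 hb1 hM hu₀ hQ') (pow_pos hu0 k).le
  linear_combination h

end PowerLaw

lemma plCdf_self {δ x : ℝ} (hx : 1 ≤ x) (m : ℕ) : plCdf δ m m x = (1 - x ^ (-(1 + δ))) ^ m := by
  simp [plCdf, hx]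

lemma mul_plPdf_eq {δ y : ℝ} (hy : 1 ≤ y) {n k : ℕ} (hk : 1 ≤ k) (hkn : k ≤ n) :
    y * plPdf δ (n - k + 1) n y
      = (1 + δ) * k * n.choose (n - k)
        * ((1 - y ^ (-(1 + δ))) ^ (n - k) * (y ^ (-(1 + δ))) ^ k) := by
  rw [plPdf, if_pos hy, Nat.add_sub_cancel, show n - (n - k + 1) + 1 = k by omega,
    Nat.cast_add, Nat.cast_sub hkn]
  field_simp
  ring

lemma setIntegral_mul_plPdf_eq (δ : ℝ) {n k : ℕ} (hk : 1 ≤ k) (hkn : k ≤ n) :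
    ∫ y in Set.Ioi (1 : ℝ), y * plPdf δ (n - k + 1) n y
      = (1 + δ) * k * n.choose (n - k) * plBeta δ k (n - k) := by
  rw [plBeta, ← integral_const_mul]
  exact setIntegral_congr_fun measurableSet_Ioi fun y hy => mul_plPdf_eq (le_of_lt hy) hk hkn

lemma setIntegral_mul_plPdf_mul_plCdf_eq (δ : ℝ) {β : ℝ} (hβ : 1 ≤ β) {n k : ℕ} (hk : 1 ≤ k)
    (hkn : k ≤ n) (m : ℕ) :
    ∫ y in Set.Ioi (1 : ℝ), y * plPdf δ (n - k + 1) n y * plCdf δ m m (β * y)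
      = (1 + δ) * k * n.choose (n - k) * plBetaWeighted δ (β ^ (-(1 + δ))) k (n - k) m := by
  rw [plBetaWeighted, ← integral_const_mul]
  refine setIntegral_congr_fun measurableSet_Ioi fun y (hy : 1 < y) => ?_
  rw [mul_plPdf_eq hy.le hk hkn, plCdf_self (by nlinarith) m,
    mul_rpow (by linarith) (by linarith)]
  ring

lemma six_rpow_mul_one_sub_pow_le {x A : ℝ} {j : ℕ} (hx : 0 < x) (hA0 : 0 ≤ A)
    (hA : A ≤ log x) (hL : 1 ≤ log x) (hu : 12 * log x / x ≤ 1) (hj : x / 4 ≤ j) :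
    (6 : ℝ) ^ A * (1 - 12 * log x / x) ^ j ≤ log x ^ 2 / x := by
  have h6 : (6 : ℝ) ≤ exp 2 := by
    have := exp_one_gt_d9
    rw [show (2 : ℝ) = 1 + 1 by norm_num, exp_add]
    nlinarith
  have hpow : (6 : ℝ) ^ A ≤ exp (2 * log x) :=
    calc (6 : ℝ) ^ A ≤ exp 2 ^ A := rpow_le_rpow (by norm_num) h6 hA0
      _ = exp (2 * A) := by rw [← exp_mul]
      _ ≤ exp (2 * log x) := by gcongr
  have htail : (1 - 12 * log x / x) ^ j ≤ exp (-(3 * log x)) := by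
    refine (one_sub_pow_le_exp_neg hu _).trans (exp_le_exp.2 (neg_le_neg ?_))
    calc 3 * log x = 12 * log x / x * (x / 4) := by field_simp; ring
      _ ≤ 12 * log x / x * j := by gcongr
  calc (6 : ℝ) ^ A * (1 - 12 * log x / x) ^ j ≤ exp (2 * log x) * exp (-(3 * log x)) :=
        mul_le_mul hpow htail (pow_nonneg (by linarith) _) (exp_pos _).le
    _ = 1 / x := by
        rw [← exp_add, show 2 * log x + -(3 * log x) = -log x by ring, exp_neg, exp_log hx,
          one_div]
    _ ≤ log x ^ 2 / x := by gcongr; nlinarith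

lemma bounds_of_sq_log_div_le {n k : ℕ} (hk : 1 ≤ k) (hkL : (k : ℝ) ≤ log n)
    (hsmall : log n ^ 2 / n ≤ 1 / 2000) :
    0 < (n : ℝ) ∧ 1 ≤ log n ∧ 2000 * log n ^ 2 ≤ n ∧ k ≤ n ∧ (n : ℝ) / 2 ≤ ((n - k : ℕ) : ℝ) := by
  have hk1 : (1 : ℝ) ≤ k := by exact_mod_cast hk
  have hL : 1 ≤ log n := hk1.trans hkL
  have hn : (0 : ℝ) < n := by
    rcases Nat.eq_zero_or_pos n with rfl | hn
    · simp at hL; linarith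
    · exact_mod_cast hn
  have hLn : 2000 * log n ^ 2 ≤ n := by rw [div_le_iff₀ hn] at hsmall; linarith
  have hkn : (k : ℝ) ≤ n / 2 := by nlinarith
  have hkn' : k ≤ n := by exact_mod_cast (show (k : ℝ) ≤ n by linarith)
  exact ⟨hn, hL, hLn, hkn', by rw [Nat.cast_sub hkn']; linarith⟩

lemma sub_one_div_one_add_mem_Ioc {δ : ℝ} (hδ : 0 < δ) {k : ℕ} (hk : 1 ≤ k) :
    (k : ℝ) - 1 / (1 + δ) ∈ Set.Ioc 0 (k : ℝ) := by
  have hk1 : (1 : ℝ) ≤ k := by exact_mod_cast hk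
  have h : 1 / (1 + δ) < 1 := by rw [div_lt_one (by linarith)]; linarith
  exact ⟨by linarith, by linarith [show 0 < 1 / (1 + δ) by positivity]⟩

section LargeN

variable {δ c : ℝ} {n k : ℕ}

lemma plBeta_le_exp_mul_rpow_mul_plBetaWeighted {b : ℝ} (hδ : 0 < δ) (hb0 : 0 ≤ b)
    (hb1 : b ≤ 1) (hc0 : 0 ≤ c) (hc1 : c ≤ 1) {m : ℕ} (hbm : b * m = c * n) (hk : 1 ≤ k)
    (hkL : (k : ℝ) ≤ log n) (hsmall : log n ^ 2 / n ≤ 1 / 2000) :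
    plBeta δ k (n - k) ≤ exp (4 * (log n ^ 2 / n))
      * ((1 + c) ^ ((k : ℝ) - 1 / (1 + δ)) * plBetaWeighted δ b k (n - k) m) := by
  obtain ⟨hn, hL, hLn, hkn, hq⟩ := bounds_of_sq_log_div_le hk hkL hsmall
  obtain ⟨hA0, hAk⟩ := sub_one_div_one_add_mem_Ioc hδ hk
  have hq1 : 1 ≤ n - k := by exact_mod_cast (show (1 : ℝ) ≤ (n - k : ℕ) by nlinarith)
  have hM : (⌈c * n⌉₊ : ℝ) < c * n + 1 := Nat.ceil_lt_add_one (by positivity)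
  have hexp : ((k : ℝ) - 1 / (1 + δ)) * ((n - k : ℕ) + ⌈c * n⌉₊ - (1 + c) * (n - k : ℕ))
      / ((1 + c) * (n - k : ℕ)) ≤ 4 * (log n ^ 2 / n) := by
    have hnum : ((n - k : ℕ) : ℝ) + ⌈c * n⌉₊ - (1 + c) * (n - k : ℕ) ≤ 2 * log n := by
      rw [Nat.cast_sub hkn]
      nlinarith [mul_le_mul_of_nonneg_right hc1 (Nat.cast_nonneg k : (0 : ℝ) ≤ k)]
    rw [div_le_iff₀ (by positivity)]
    calc _ ≤ ((k : ℝ) - 1 / (1 + δ)) * (2 * log n) := mul_le_mul_of_nonneg_left hnum hA0.le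
      _ ≤ log n * (2 * log n) := by gcongr; exact hAk.trans hkL
      _ = 4 * (log n ^ 2 / n) * (n / 2) := by field_simp; ring
      _ ≤ 4 * (log n ^ 2 / n) * ((1 + c) * (n - k : ℕ)) := by gcongr; nlinarith
  calc plBeta δ k (n - k)
      ≤ (1 + c) ^ ((k : ℝ) - 1 / (1 + δ)) * exp (4 * (log n ^ 2 / n))
          * plBeta δ k (n - k + ⌈c * n⌉₊) := by
        refine (le_rpow_mul_exp_mul_of_rec (fun Q => (plBeta_pos hδ hk Q).le) hA0.le
          (plBeta_succ hδ hk) hq1 ⌈c * n⌉₊ (κ := 1 + c) (by linarith)).trans ?_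
        gcongr
        exact (plBeta_pos hδ hk _).le
    _ ≤ (1 + c) ^ ((k : ℝ) - 1 / (1 + δ)) * exp (4 * (log n ^ 2 / n))
          * plBetaWeighted δ b k (n - k) m := by
        gcongr
        exact plBeta_le_plBetaWeighted hδ hb0 hb1 hk (hbm.trans_le (Nat.le_ceil _))
    _ = _ := by ring

lemma rpow_mul_plBeta_add_floor_le (hδ : 0 < δ) (hc0 : 0 ≤ c) (hc1 : c ≤ 1) (hk : 1 ≤ k)
    (hkL : (k : ℝ) ≤ log n) (hsmall : log n ^ 2 / n ≤ 1 / 2000) :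
    (1 + c) ^ ((k : ℝ) - 1 / (1 + δ)) * plBeta δ k (n - k + ⌊c * n⌋₊)
      ≤ exp (6 * (log n ^ 2 / n)) * plBeta δ k (n - k) := by
  obtain ⟨hn, hL, hLn, hkn, hq⟩ := bounds_of_sq_log_div_le hk hkL hsmall
  obtain ⟨hA0, hAk⟩ := sub_one_div_one_add_mem_Ioc hδ hk
  set A : ℝ := (k : ℝ) - 1 / (1 + δ)
  set q : ℝ := ((n - k : ℕ) : ℝ)
  set M : ℕ := ⌊c * n⌋₊
  have hAL : A ≤ log n := hAk.trans hkL
  have hMn : (M : ℝ) ≤ n := (Nat.floor_le (by positivity)).trans (by nlinarith)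
  have hnum : (1 + c) * (q + 1) - (q + M + 1) ≤ 1 := by
    have := Nat.lt_floor_add_one (c * n)
    have : q = n - k := Nat.cast_sub hkn
    nlinarith [mul_le_mul_of_nonneg_left (show (1 : ℝ) ≤ k by exact_mod_cast hk) hc0]
  have hfirst : A * ((1 + c) * (q + 1) - (q + M + 1)) / (q + M + 1) ≤ 2 * (log n ^ 2 / n) := by
    rw [div_le_iff₀ (by positivity)]
    calc _ ≤ A * 1 := mul_le_mul_of_nonneg_left hnum hA0.le
      _ ≤ log n ^ 2 := by nlinarith
      _ = 2 * (log n ^ 2 / n) * (n / 2) := by field_simp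
      _ ≤ 2 * (log n ^ 2 / n) * (q + M + 1) := by gcongr; linarith
  have hsecond : A ^ 2 * M / (q + 1) ^ 2 ≤ 4 * (log n ^ 2 / n) := by
    rw [div_le_iff₀ (by positivity)]
    calc A ^ 2 * M ≤ log n ^ 2 * n := by gcongr
      _ = 4 * (log n ^ 2 / n) * (n / 2) ^ 2 := by field_simp; ring
      _ ≤ 4 * (log n ^ 2 / n) * (q + 1) ^ 2 := by gcongr; linarith
  calc (1 + c) ^ A * plBeta δ k (n - k + M)
      ≤ exp (A * ((1 + c) * (q + 1) - (q + M + 1)) / (q + M + 1) + A ^ 2 * M / (q + 1) ^ 2)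
        * plBeta δ k (n - k) :=
        rpow_mul_le_exp_mul_of_rec (fun Q => (plBeta_pos hδ hk Q).le) hA0.le
          (plBeta_succ hδ hk) (n - k) M (by linarith)
    _ ≤ exp (6 * (log n ^ 2 / n)) * plBeta δ k (n - k) := by
        gcongr
        · exact (plBeta_pos hδ hk _).le
        · linarith

-- The tail `u > 12 log n / n` of `plBetaWeighted`: there `(1 - u) ^ (q / 2) ≤ n⁻³`, which beats
-- `(1 + c) ^ A G (q / 2) ≤ 6 ^ A G q ≤ n ^ 2 G q`.
lemma rpow_mul_one_sub_pow_mul_plBeta_half_le (hδ : 0 < δ) (hc0 : 0 ≤ c) (hc1 : c ≤ 1)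
    (hk : 1 ≤ k) (hkL : (k : ℝ) ≤ log n) (hsmall : log n ^ 2 / n ≤ 1 / 2000) :
    (1 + c) ^ ((k : ℝ) - 1 / (1 + δ))
        * ((1 - 12 * log n / n) ^ (n - k - (n - k) / 2) * plBeta δ k ((n - k) / 2))
      ≤ log n ^ 2 / n * plBeta δ k (n - k) := by
  obtain ⟨hn, hL, hLn, hkn, hq⟩ := bounds_of_sq_log_div_le hk hkL hsmall
  obtain ⟨hA0, hAk⟩ := sub_one_div_one_add_mem_Ioc hδ hk
  set A : ℝ := (k : ℝ) - 1 / (1 + δ)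
  set q : ℕ := n - k
  set Q : ℕ := q / 2
  have hq2 : (2 : ℝ) ≤ q := by nlinarith
  have hq2' : 2 ≤ q := by exact_mod_cast hq2
  have hQ1 : 1 ≤ Q := by omega
  have hQ0 : (0 : ℝ) < Q := by exact_mod_cast hQ1
  have hqQ : (1 + c) * q ≤ 6 * Q := by
    have : q ≤ 3 * Q := by omega
    have : (q : ℝ) ≤ 3 * Q := by exact_mod_cast this
    nlinarith
  have hqQ' : (n : ℝ) / 4 ≤ ((q - Q : ℕ) : ℝ) := by
    have : q ≤ 2 * (q - Q) := by omega
    have : (q : ℝ) ≤ 2 * ((q - Q : ℕ) : ℝ) := by exact_mod_cast this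
    linarith
  have hu₀ : 12 * log n / n ≤ 1 := by rw [div_le_one hn]; nlinarith
  have hsix := six_rpow_mul_one_sub_pow_le hn hA0.le (hAk.trans hkL) hL hu₀ hqQ'
  have hmono := mul_rpow_le_mul_rpow_of_rec (fun Q => (plBeta_pos hδ hk Q).le) hA0.le
    (plBeta_succ hδ hk) hQ1 (Nat.div_le_self q 2)
  refine le_of_mul_le_mul_right ?_ (rpow_pos_of_pos hQ0 A)
  calc (1 + c) ^ A * ((1 - 12 * log n / n) ^ (q - Q) * plBeta δ k Q) * (Q : ℝ) ^ A
      = (1 - 12 * log n / n) ^ (q - Q) * (1 + c) ^ A * (plBeta δ k Q * (Q : ℝ) ^ A) := by ring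
    _ ≤ (1 - 12 * log n / n) ^ (q - Q) * (1 + c) ^ A * (plBeta δ k q * (q : ℝ) ^ A) := by
        gcongr
    _ = (1 - 12 * log n / n) ^ (q - Q) * ((1 + c) * q) ^ A * plBeta δ k q := by
        rw [mul_rpow (by linarith) (Nat.cast_nonneg q)]; ring
    _ ≤ (1 - 12 * log n / n) ^ (q - Q) * (6 * Q) ^ A * plBeta δ k q := by
        gcongr
        · exact (plBeta_pos hδ hk _).le
    _ = (6 : ℝ) ^ A * (1 - 12 * log n / n) ^ (q - Q) * ((Q : ℝ) ^ A * plBeta δ k q) := by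
        rw [mul_rpow (by norm_num) hQ0.le]; ring
    _ ≤ log n ^ 2 / n * ((Q : ℝ) ^ A * plBeta δ k q) := by
        gcongr
        exact mul_nonneg (rpow_nonneg hQ0.le _) (plBeta_pos hδ hk _).le
    _ = _ := by ring

lemma rpow_mul_plBetaWeighted_le {b : ℝ} (hδ : 0 < δ) (hb0 : 0 ≤ b) (hb1 : b ≤ 1)
    (hc0 : 0 ≤ c) (hc1 : c ≤ 1) {m : ℕ} (hbm : b * m = c * n) (hk : 1 ≤ k)
    (hkL : (k : ℝ) ≤ log n) (hsmall : log n ^ 2 / n ≤ 1 / 2000) :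
    (1 + c) ^ ((k : ℝ) - 1 / (1 + δ)) * plBetaWeighted δ b k (n - k) m
      ≤ (exp (294 * (log n ^ 2 / n)) + log n ^ 2 / n) * plBeta δ k (n - k) := by
  obtain ⟨hn, hL, hLn, -, -⟩ := bounds_of_sq_log_div_le hk hkL hsmall
  have hu₀ : 12 * log n / n ≤ 1 / 2 := by rw [div_le_iff₀ hn]; nlinarith
  have hsplit := plBetaWeighted_le hδ hb0 hb1 hk (m := m) (M := ⌊c * n⌋₊)
    (hbm ▸ Nat.floor_le (by positivity)) hu₀ (Nat.div_le_self (n - k) 2)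
  have hweight : exp (2 * (b * m) * (12 * log n / n) ^ 2) ≤ exp (288 * (log n ^ 2 / n)) := by
    rw [hbm, exp_le_exp]
    calc 2 * (c * n) * (12 * log n / n) ^ 2 = 288 * c * (log n ^ 2 / n) := by field_simp; ring
      _ ≤ 288 * (log n ^ 2 / n) := by gcongr; nlinarith [show 0 ≤ log n ^ 2 / n by positivity]
  have hmain := rpow_mul_plBeta_add_floor_le hδ hc0 hc1 hk hkL hsmall
  have htail := rpow_mul_one_sub_pow_mul_plBeta_half_le hδ hc0 hc1 hk hkL hsmall
  have hG := (plBeta_pos hδ hk (n - k + ⌊c * n⌋₊)).le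
  calc (1 + c) ^ ((k : ℝ) - 1 / (1 + δ)) * plBetaWeighted δ b k (n - k) m
      ≤ (1 + c) ^ ((k : ℝ) - 1 / (1 + δ)) * (exp (288 * (log n ^ 2 / n))
          * plBeta δ k (n - k + ⌊c * n⌋₊) + (1 - 12 * log n / n) ^ (n - k - (n - k) / 2)
          * plBeta δ k ((n - k) / 2)) := by
        gcongr
        exact hsplit.trans (by gcongr)
    _ ≤ exp (288 * (log n ^ 2 / n)) * (exp (6 * (log n ^ 2 / n)) * plBeta δ k (n - k))
          + log n ^ 2 / n * plBeta δ k (n - k) := by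
        rw [mul_add, mul_left_comm]
        gcongr
    _ = _ := by rw [← mul_assoc, ← exp_add]; ring_nf

lemma rpow_mul_plBetaWeighted_bounds {b : ℝ} (hδ : 0 < δ) (hb0 : 0 ≤ b) (hb1 : b ≤ 1)
    (hc0 : 0 ≤ c) (hc1 : c ≤ 1) {m : ℕ} (hbm : b * m = c * n) (hk : 1 ≤ k)
    (hkL : (k : ℝ) ≤ log n) (hsmall : log n ^ 2 / n ≤ 1 / 2000) :
    (1 + c) ^ ((k : ℝ) - 1 / (1 + δ)) * plBetaWeighted δ b k (n - k) m
        ≤ (1 + 600 * log n ^ 2 / n) * plBeta δ k (n - k) ∧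
      plBeta δ k (n - k)
        ≤ (1 + 600 * log n ^ 2 / n)
          * ((1 + c) ^ ((k : ℝ) - 1 / (1 + δ)) * plBetaWeighted δ b k (n - k) m) := by
  have hlow := plBeta_le_exp_mul_rpow_mul_plBetaWeighted hδ hb0 hb1 hc0 hc1 hbm hk hkL hsmall
  have hup := rpow_mul_plBetaWeighted_le hδ hb0 hb1 hc0 hc1 hbm hk hkL hsmall
  have hG := plBeta_pos hδ hk (n - k)
  have ht : 0 ≤ log n ^ 2 / n := by positivity
  have h600 : 600 * log n ^ 2 / n = 600 * (log n ^ 2 / n) := mul_div_assoc _ _ _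
  constructor
  · refine hup.trans (mul_le_mul_of_nonneg_right ?_ hG.le)
    linarith [exp_le_one_add_two_mul (by positivity : 0 ≤ 294 * (log n ^ 2 / n)) (by linarith)]
  · refine hlow.trans (mul_le_mul_of_nonneg_right ?_
      (pos_of_mul_pos_right (hG.trans_le hlow) (exp_pos _).le).le)
    linarith [exp_le_one_add_two_mul (by positivity : 0 ≤ 4 * (log n ^ 2 / n)) (by linarith)]

end LargeN

lemma eventually_sq_log_div_le {ε : ℝ} (hε : 0 < ε) :
    ∀ᶠ n : ℕ in Filter.atTop, log n ^ 2 / n ≤ ε := by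
  have h := (tendsto_pow_log_div_mul_add_atTop 1 0 2 one_ne_zero).comp
    tendsto_natCast_atTop_atTop
  simp only [one_mul, add_zero] at h
  exact h.eventually (ge_mem_nhds hε)

lemma div_le_of_rpow_mul_le {κ A C₀ H G r : ℝ} (hκ : 0 < κ) (hC₀ : 0 < C₀) (hG : 0 < G)
    (h : κ ^ A * H ≤ r * G) : C₀ * H / (κ ^ (-A) * (C₀ * G)) ≤ r := by
  rw [rpow_neg hκ.le, div_le_iff₀ (by positivity)]
  calc C₀ * H = C₀ * (κ ^ A)⁻¹ * (κ ^ A * H) := by field_simp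
    _ ≤ C₀ * (κ ^ A)⁻¹ * (r * G) := by gcongr
    _ = _ := by ring

lemma div_le_of_le_rpow_mul {κ A C₀ H G r : ℝ} (hκ : 0 < κ) (hC₀ : 0 < C₀) (hG : 0 < G)
    (hr : 0 ≤ r) (h : G ≤ r * (κ ^ A * H)) : κ ^ (-A) * (C₀ * G) / (C₀ * H) ≤ r := by
  have hκA := rpow_pos_of_pos hκ A
  have hH : 0 < H := pos_of_mul_pos_right (pos_of_mul_pos_right (hG.trans_le h) hr) hκA.le
  rw [rpow_neg hκ.le, div_le_iff₀ (by positivity)]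
  calc (κ ^ A)⁻¹ * (C₀ * G) ≤ (κ ^ A)⁻¹ * (C₀ * (r * (κ ^ A * H))) := by gcongr
    _ = _ := by field_simp

/-- `E[Y_{(n-k+1:n)}·1{X_{(αn:αn)} < β Y_{(n-k+1:n)}}]` is within a
multiplicative factor `1 ± O((ln n)²/n)` of
`(1 + αβ^{-(1+δ)})^{−(k − 1/(1+δ))}·E[Y_{(n-k+1:n)}]`. -/
theorem expected_Y_conditional_approx
    (δ α β : ℝ) (hδ : 0 < δ) (hα0 : 0 < α) (hα1 : α ≤ 1) (hβ : 1 < β)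
    (c : ℝ) (hc : c = α * β ^ (-(1 + δ))) :
    ∃ a : ℝ, 0 < a ∧ ∃ n₀ : ℕ, ∀ n : ℕ, n₀ ≤ n → ∀ m : ℕ, 0 < m → (m : ℝ) = α * n →
      ∀ k : ℕ, 1 ≤ k → (k : ℝ) ≤ (1 - c) * Real.log n →
        (∫ y in Set.Ioi (1 : ℝ), y * plPdf δ (n - k + 1) n y * plCdf δ m m (β * y)) /
            ((1 + α * β ^ (-(1 + δ))) ^ (-((k : ℝ) - 1 / (1 + δ))) *
              ∫ y in Set.Ioi (1 : ℝ), y * plPdf δ (n - k + 1) n y)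
          ≤ 1 + a * (Real.log n) ^ 2 / n ∧
        ((1 + α * β ^ (-(1 + δ))) ^ (-((k : ℝ) - 1 / (1 + δ))) *
            ∫ y in Set.Ioi (1 : ℝ), y * plPdf δ (n - k + 1) n y) /
            (∫ y in Set.Ioi (1 : ℝ), y * plPdf δ (n - k + 1) n y * plCdf δ m m (β * y))
          ≤ 1 + a * (Real.log n) ^ 2 / n := by
  obtain ⟨n₀, hn₀⟩ :=
    Filter.eventually_atTop.1 (eventually_sq_log_div_le (by norm_num : (0 : ℝ) < 1 / 2000))
  refine ⟨600, by norm_num, n₀, fun n hn m _ hmα k hk hkc => ?_⟩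
  have hb0 : 0 < β ^ (-(1 + δ)) := by positivity
  have hb1 : β ^ (-(1 + δ)) < 1 := rpow_lt_one_of_one_lt_of_neg hβ (by linarith)
  have hc0 : 0 ≤ c := by rw [hc]; positivity
  have hc1 : c ≤ 1 := by rw [hc]; nlinarith
  have hkL : (k : ℝ) ≤ log n := hkc.trans (by nlinarith [log_natCast_nonneg n])
  have hbm : β ^ (-(1 + δ)) * m = c * n := by rw [hmα, hc]; ring
  obtain ⟨-, -, -, hkn, -⟩ := bounds_of_sq_log_div_le hk hkL (hn₀ n hn)
  obtain ⟨hup, hlow⟩ :=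
    rpow_mul_plBetaWeighted_bounds hδ hb0.le hb1.le hc0 hc1 hbm hk hkL (hn₀ n hn)
  have hC₀ : 0 < (1 + δ) * k * (n.choose (n - k) : ℝ) := by
    have := Nat.choose_pos (Nat.sub_le n k)
    have : (0 : ℝ) < k := by exact_mod_cast hk
    positivity
  rw [setIntegral_mul_plPdf_mul_plCdf_eq δ hβ.le hk hkn, setIntegral_mul_plPdf_eq δ hk hkn, ← hc]
  exact ⟨div_le_of_rpow_mul_le (by linarith) hC₀ (plBeta_pos hδ hk _) hup,
    div_le_of_le_rpow_mul (by linarith) hC₀ (plBeta_pos hδ hk _) (by positivity) hlow⟩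
end

section
/- Let μ be a probability distribution on [0,1] with a continuous density f such that sup{x : f(x) > 0} = 1, and let F be its CDF. Let b : ℝ → ℝ be any function such that b(x) ≤ T for all x ≥ 0, where T < 1 is a fixed constant with F(T) < 1. For each n, let X₁,…,Xₙ,Y₁,…,Yₙ be i.i.d. with law μ, let X_{(n:n)} = max_i X_i, and let Y_{(n-1:n)} be the second largest of Y₁,…,Yₙ. Then for all sufficiently large n, the event G = {b(X_{(n:n)}) < Y_{(n-1:n)}} has positive probability and E[(X_{(n:n)} − Y_{(n-1:n)})·1_G] > 0; equivalently, E[X_{(n:n)} − Y_{(n-1:n)} | b(X_{(n:n)}) < Y_{(n-1:n)}] > 0. -/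
open MeasureTheory Real

/-- The `k`-th smallest value (1-indexed) among `v 0, …, v (n-1)`;
`ostat v n` is the maximum and `ostat v (n-1)` the second largest. -/
noncomputable def ostat {n : ℕ} (v : Fin n → ℝ) (k : ℕ) : ℝ :=
  (List.insertionSort (· ≤ ·) (List.ofFn v)).getD (k - 1) 0

/-!
Write `M` for the best `X`-candidate, `S` for the second-best `Y`-candidate and
`G = {b(M) < S}`. All potentials lie in `[0,1]`, so `M - S ≤ 1`, and off `G` we have
`S ≤ b(M) ≤ T`; hence `E[(M - S) 1_G] ≥ E[M - S] - P(S ≤ T) ≥ E[M - S] - n F(T)^(n-1)`,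
the last step by a union bound over the index of the one `Y`-candidate allowed above `T`.
Since `M` has the law of the best `Y`-candidate, `E[M - S]` is the expected gap between the
two largest of `n` samples, which for `a < x` is at least
`(x - a) P(X₁ > x, X_j ≤ a for j ≠ 1) = (x - a) (1 - F(x)) F(a)^(n-1)`.
Continuity of the density and `sup {f > 0} = 1` give `T < a < x < 1` with `F(T) < F(a)` and
`F(x) < 1`; then `n (F(T) / F(a))^(n-1) → 0` makes the expectation positive for large `n`, and a
set carrying a positive integral has positive measure.
-/

open Set Filter Topology
open scoped Finset

theorem List.Pairwise.getElem_le_iff_lt_countP {α : Type*} [LinearOrder α] {l : List α}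
    (hl : l.Pairwise (· ≤ ·)) {j : ℕ} (hj : j < l.length) (x : α) :
    l[j] ≤ x ↔ j < l.countP (· ≤ x) := by
  induction l generalizing j with
  | nil => simp at hj
  | cons a l ih =>
    rw [List.pairwise_cons] at hl
    by_cases hax : a ≤ x
    · cases j with
      | zero => simp [hax]
      | succ j => simpa [List.countP_cons, hax] using ih hl.2 (by simpa using hj)
    · have hgt : ∀ y ∈ a :: l, x < y := by
        simp only [List.mem_cons, forall_eq_or_imp]
        exact ⟨not_le.mp hax, fun y hy => (not_le.mp hax).trans_le (hl.1 y hy)⟩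
      rw [List.countP_eq_zero.mpr fun y hy => by simpa using hgt y hy]
      simpa using hgt _ (List.getElem_mem hj)

theorem List.countP_ofFn {α : Type*} {n : ℕ} (v : Fin n → α) (p : α → Bool) :
    (List.ofFn v).countP p = #{i | p (v i)} := by
  rw [Finset.card_def, Finset.filter_val, ← Multiset.countP_map v _ (p · = true),
    Fin.univ_val_map, Multiset.coe_countP]
  simp

section OrderStatistics

variable {n k : ℕ} (v : Fin n → ℝ)

theorem ostat_le_iff (hk : 1 ≤ k) (hkn : k ≤ n) (x : ℝ) :
    ostat v k ≤ x ↔ k ≤ #{i | v i ≤ x} := by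
  have hlen : k - 1 < (List.insertionSort (· ≤ ·) (List.ofFn v)).length := by simp; omega
  rw [ostat, List.getD_eq_getElem _ _ hlen,
    (List.pairwise_insertionSort _ _).getElem_le_iff_lt_countP hlen,
    (List.perm_insertionSort _ _).countP_eq, List.countP_ofFn]
  simp only [decide_eq_true_eq]
  omega

theorem exists_ostat_eq (hk : 1 ≤ k) (hkn : k ≤ n) : ∃ i, ostat v k = v i := by
  have hlen : k - 1 < (List.insertionSort (· ≤ ·) (List.ofFn v)).length := by simp; omega
  have hmem := (List.perm_insertionSort (· ≤ ·) (List.ofFn v)).mem_iff.mp (List.getElem_mem hlen)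
  obtain ⟨i, hi⟩ := List.mem_ofFn.mp hmem
  exact ⟨i, by rw [ostat, List.getD_eq_getElem _ _ hlen, hi]⟩

theorem ostat_le_ostat {l : ℕ} (hk : 1 ≤ k) (hkl : k ≤ l) (hln : l ≤ n) :
    ostat v k ≤ ostat v l :=
  (ostat_le_iff v hk (hkl.trans hln) _).mpr <|
    hkl.trans ((ostat_le_iff v (hk.trans hkl) hln _).mp le_rfl)

theorem ostat_self_le_iff (hn : 1 ≤ n) (x : ℝ) : ostat v n ≤ x ↔ ∀ i, v i ≤ x := by
  rw [ostat_le_iff v hn le_rfl]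
  simpa using (Finset.card_filter_le Finset.univ fun i => v i ≤ x).ge_iff_eq.trans
    Finset.card_filter_eq_iff

theorem le_ostat_self (hn : 1 ≤ n) (i : Fin n) : v i ≤ ostat v n :=
  (ostat_self_le_iff v hn _).mp le_rfl i

theorem ostat_sub_one_le_iff (hn : 2 ≤ n) (x : ℝ) :
    ostat v (n - 1) ≤ x ↔ ∃ i, ∀ j ≠ i, v j ≤ x := by
  have : Nonempty (Fin n) := ⟨⟨0, by omega⟩⟩
  have hsplit := Finset.card_filter_add_card_filter_not (s := Finset.univ) fun i => v i ≤ x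
  rw [Finset.card_univ, Fintype.card_fin] at hsplit
  rw [ostat_le_iff v (by omega) (by omega),
    show n - 1 ≤ #{i | v i ≤ x} ↔ #{i | ¬v i ≤ x} ≤ 1 by omega,
    Finset.card_le_one_iff_subset_singleton]
  simp only [Finset.subset_iff, Finset.mem_filter, Finset.mem_univ, true_and,
    Finset.mem_singleton]
  exact exists_congr fun i => forall_congr' fun j => not_imp_comm

theorem measurable_ostat (hk : 1 ≤ k) (hkn : k ≤ n) :
    Measurable fun v : Fin n → ℝ => ostat v k := by
  refine measurable_of_Iic fun x => ?_
  have : (fun v : Fin n → ℝ => ostat v k) ⁻¹' Iic x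
      = ⋃ s : Finset (Fin n), ⋃ (_ : k ≤ #s), ⋂ i ∈ s, {v | v i ≤ x} := by
    ext v
    simp only [mem_preimage, mem_Iic, mem_iUnion, mem_iInter, mem_ofPred_eq,
      ostat_le_iff v hk hkn, exists_prop]
    refine ⟨fun h => ⟨_, h, fun i hi => (Finset.mem_filter.mp hi).2⟩, fun ⟨s, hs, hsx⟩ => ?_⟩
    exact hs.trans (Finset.card_le_card fun i hi =>
      Finset.mem_filter.mpr ⟨Finset.mem_univ i, hsx i hi⟩)
  rw [this]
  exact .iUnion fun s => .iUnion fun _ => .biInter s.countable_toSet fun i _ =>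
    measurableSet_le (measurable_pi_apply i) measurable_const

end OrderStatistics

theorem MeasureTheory.Measure.pi_univ_pi_update {α ι : Type*} [MeasurableSpace α] [Fintype ι]
    [DecidableEq ι] (μ : Measure α) [SigmaFinite μ] (i : ι) (s t : Set α) :
    Measure.pi (fun _ : ι => μ) (univ.pi (Function.update (fun _ => t) i s))
      = μ s * μ t ^ (Fintype.card ι - 1) := by
  rw [Measure.pi_pi]
  simp only [Function.apply_update (fun _ => μ), Finset.prod_update_of_mem (Finset.mem_univ i),
    Finset.prod_const, Finset.card_sdiff, Finset.card_univ, Finset.inter_univ,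
    Finset.card_singleton]

theorem ae_pi_forall_mem {α ι : Type*} [MeasurableSpace α] [Fintype ι] {μ : Measure α}
    [SigmaFinite μ] {s : Set α} (hs : ∀ᵐ x ∂μ, x ∈ s) :
    ∀ᵐ v ∂Measure.pi (fun _ : ι => μ), ∀ i, v i ∈ s :=
  ae_all_iff.mpr fun _ => Measure.tendsto_eval_ae_ae.eventually hs

theorem sub_measureReal_compl_le_setIntegral {α : Type*} [MeasurableSpace α] {ν : Measure α}
    [IsFiniteMeasure ν] {g : α → ℝ} {s : Set α} (hs : MeasurableSet s) (hg : Integrable g ν)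
    (hg1 : ∀ᵐ x ∂ν, g x ≤ 1) :
    ∫ x, g x ∂ν - ν.real sᶜ ≤ ∫ x in s, g x ∂ν := by
  have hcompl : ∫ x in sᶜ, g x ∂ν ≤ ν.real sᶜ := by
    simpa using integral_mono_ae hg.integrableOn (integrable_const (1 : ℝ)) (ae_restrict_of_ae hg1)
  linarith [integral_add_compl hs hg]

theorem measure_pos_of_setIntegral_pos {α : Type*} [MeasurableSpace α] {ν : Measure α}
    {g : α → ℝ} {s : Set α} (h : 0 < ∫ x in s, g x ∂ν) : 0 < ν s := by
  refine pos_iff_ne_zero.mpr fun hs => h.ne' ?_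
  rw [Measure.restrict_eq_zero.mpr hs, integral_zero_measure]

theorem eventually_natCast_mul_pow_lt {q p c : ℝ} (hq : 0 ≤ q) (hqp : q < p) (hc : 0 < c) :
    ∀ᶠ n : ℕ in atTop, n * q ^ (n - 1) < c * p ^ (n - 1) := by
  have hp : 0 < p := hq.trans_lt hqp
  have hr : q / p < 1 := (div_lt_one hp).mpr hqp
  have hlim : Tendsto (fun m : ℕ => ((m : ℝ) + 1) * (q / p) ^ m) atTop (𝓝 0) := by
    simpa [add_mul] using (tendsto_self_mul_const_pow_of_lt_one (by positivity) hr).add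
      (tendsto_pow_atTop_nhds_zero_of_lt_one (by positivity) hr)
  filter_upwards [(hlim.comp (tendsto_sub_atTop_nat 1)).eventually_lt_const hc,
    eventually_ge_atTop 1] with n hn hn1
  have hcast : ((n - 1 : ℕ) : ℝ) + 1 = n := by rw [Nat.cast_sub hn1]; ring
  rw [Function.comp_apply, hcast, div_pow] at hn
  have hpn : 0 < p ^ (n - 1) := pow_pos hp _
  calc (n : ℝ) * q ^ (n - 1) = n * (q ^ (n - 1) / p ^ (n - 1)) * p ^ (n - 1) := by
        field_simp
    _ < c * p ^ (n - 1) := mul_lt_mul_of_pos_right hn hpn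

theorem measureReal_Iic_lt_of_measure_Ioo_pos {μ : Measure ℝ} [IsFiniteMeasure μ] {s t : ℝ}
    (h : 0 < μ (Ioo s t)) : μ.real (Iic s) < μ.real (Iic t) := by
  have hst : s ≤ t := by
    by_contra hts
    simp [Ioo_eq_empty_of_le (not_le.mp hts).le] at h
  rw [← Iic_union_Ioc_eq_Iic hst, measureReal_union (Iic_disjoint_Ioc le_rfl) measurableSet_Ioc,
    lt_add_iff_pos_right]
  exact ENNReal.toReal_pos (h.trans_le (measure_mono Ioo_subset_Ioc_self)).ne' (measure_ne_top _ _)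

theorem withDensity_ofReal_pos {X : Type*} [TopologicalSpace X] [MeasurableSpace X]
    [OpensMeasurableSpace X] (ν : Measure X) [ν.IsOpenPosMeasure] {g : X → ℝ} (hg : Continuous g)
    {s : Set X} (hs : IsOpen s) {x : X} (hx : x ∈ s) (hgx : 0 < g x) :
    0 < ν.withDensity (fun y => ENNReal.ofReal (g y)) s := by
  rw [pos_iff_ne_zero, Ne, withDensity_apply_eq_zero' hg.measurable.ennreal_ofReal.aemeasurable]
  have hopen : IsOpen ({y | ENNReal.ofReal (g y) ≠ 0} ∩ s) := by
    simpa using (isOpen_lt continuous_const hg).inter hs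
  exact (hopen.measure_pos ν ⟨x, by simpa using hgx, hx⟩).ne'

theorem ae_withDensity_ofReal_mem {X : Type*} [MeasurableSpace X] (ν : Measure X) {g : X → ℝ}
    (hg : Measurable g) {s : Set X} (hgs : ∀ x ∉ s, g x = 0) :
    ∀ᵐ x ∂ν.withDensity (fun y => ENNReal.ofReal (g y)), x ∈ s :=
  (ae_withDensity_iff hg.ennreal_ofReal).mpr <| ae_of_all _ fun x hx => by
    by_contra hxs
    simp [hgs x hxs] at hx

theorem exists_mem_Ioo_pos_of_sSup_eq_one {f : ℝ → ℝ} (hf : Continuous f)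
    (hsupp : ∀ x, x ∉ Icc (0 : ℝ) 1 → f x = 0) (hsup : sSup {x | 0 < f x} = 1) {y : ℝ}
    (hy : y < 1) : ∃ z ∈ Ioo y 1, 0 < f z := by
  have hne : {x | 0 < f x}.Nonempty := by
    by_contra h
    simp [Set.not_nonempty_iff_eq_empty.mp h] at hsup
  have hle : ∀ z, 0 < f z → z ≤ 1 := fun z hz => by
    by_contra h
    exact hz.ne' (hsupp z fun hz' => h hz'.2)
  obtain ⟨z, hz, hyz⟩ := exists_lt_of_lt_csSup hne (hsup ▸ hy)
  have hnear : ∀ᶠ t in 𝓝[<] z, 0 < f t ∧ t ∈ Ioo y z :=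
    ((hf.continuousAt.eventually (lt_mem_nhds hz)).filter_mono nhdsWithin_le_nhds).and
      (Ioo_mem_nhdsLT hyz)
  obtain ⟨t, hft, hyt, htz⟩ := hnear.exists
  exact ⟨t, ⟨hyt, htz.trans_le (hle z hz)⟩, hft⟩

section Sample

variable {μ : Measure ℝ} [IsProbabilityMeasure μ] {n k : ℕ}

theorem ae_ostat_mem {s : Set ℝ} (hs : ∀ᵐ x ∂μ, x ∈ s) (hk : 1 ≤ k) (hkn : k ≤ n) :
    ∀ᵐ v ∂Measure.pi (fun _ : Fin n => μ), ostat v k ∈ s := by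
  filter_upwards [ae_pi_forall_mem hs] with v hv
  obtain ⟨i, hi⟩ := exists_ostat_eq v hk hkn
  exact hi ▸ hv i

theorem integrable_ostat (hμ : ∀ᵐ x ∂μ, x ∈ Icc (0 : ℝ) 1) (hk : 1 ≤ k) (hkn : k ≤ n) :
    Integrable (fun v => ostat v k) (Measure.pi fun _ : Fin n => μ) := by
  refine .of_bound (measurable_ostat hk hkn).aestronglyMeasurable 1 ?_
  filter_upwards [ae_ostat_mem hμ hk hkn] with v hv
  rw [Real.norm_eq_abs, abs_le]
  exact ⟨by linarith [hv.1], hv.2⟩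

theorem measureReal_ostat_sub_one_le_le (hn : 2 ≤ n) (x : ℝ) :
    (Measure.pi fun _ : Fin n => μ).real {v | ostat v (n - 1) ≤ x}
      ≤ n * μ.real (Iic x) ^ (n - 1) := by
  classical
  have hcover : {v : Fin n → ℝ | ostat v (n - 1) ≤ x}
      = ⋃ i, univ.pi (Function.update (fun _ => Iic x) i univ) := by
    ext v
    simp [ostat_sub_one_le_iff v hn, Function.update_apply]
  calc _ ≤ ∑ i : Fin n, (Measure.pi fun _ : Fin n => μ).real
        (univ.pi (Function.update (fun _ => Iic x) i univ)) :=
        hcover ▸ measureReal_iUnion_fintype_le _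
    _ = n * μ.real (Iic x) ^ (n - 1) := by
        simp only [measureReal_def, Measure.pi_univ_pi_update, measure_univ, one_mul,
          ENNReal.toReal_pow, Fintype.card_fin, Finset.sum_const, Finset.card_univ, nsmul_eq_mul]

theorem mul_measureReal_le_integral_ostat_sub (hμ : ∀ᵐ x ∂μ, x ∈ Icc (0 : ℝ) 1) (hn : 2 ≤ n)
    {a x : ℝ} :
    (x - a) * μ.real (Ioi x) * μ.real (Iic a) ^ (n - 1)
      ≤ ∫ v, (ostat v n - ostat v (n - 1)) ∂Measure.pi fun _ : Fin n => μ := by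
  classical
  obtain ⟨i₀⟩ : Nonempty (Fin n) := ⟨⟨0, by omega⟩⟩
  set B := univ.pi (Function.update (fun _ : Fin n => Iic a) i₀ (Ioi x))
  have hB : MeasurableSet B := .univ_pi fun j => by
    rcases eq_or_ne j i₀ with rfl | hj
    · simp [measurableSet_Ioi]
    · simp [hj, measurableSet_Iic]
  have hgap : ∀ v ∈ B, x - a ≤ ostat v n - ostat v (n - 1) := fun v hv => by
    rw [mem_univ_pi] at hv
    have hmax : x < ostat v n :=
      (by simpa using hv i₀ : x < v i₀).trans_le (le_ostat_self v (by omega) _)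
    have hsecond : ostat v (n - 1) ≤ a :=
      (ostat_sub_one_le_iff v hn a).mpr
        ⟨i₀, fun j hj => by simpa [Function.update_of_ne hj] using hv j⟩
    linarith
  have hint : Integrable (fun v => ostat v n - ostat v (n - 1))
      (Measure.pi fun _ : Fin n => μ) :=
    (integrable_ostat hμ (by omega) le_rfl).sub (integrable_ostat hμ (by omega) (by omega))
  calc (x - a) * μ.real (Ioi x) * μ.real (Iic a) ^ (n - 1)
      = (x - a) * (Measure.pi fun _ : Fin n => μ).real B := by
        simp only [B, measureReal_def, Measure.pi_univ_pi_update, ENNReal.toReal_mul,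
          ENNReal.toReal_pow, Fintype.card_fin, mul_assoc]
    _ ≤ ∫ v in B, (ostat v n - ostat v (n - 1)) ∂Measure.pi fun _ : Fin n => μ :=
        setIntegral_ge_of_const_le_real hB (measure_ne_top _ _) hgap hint.integrableOn
    _ ≤ _ := setIntegral_le_integral hint <| ae_of_all _ fun v =>
        sub_nonneg.mpr (ostat_le_ostat v (by omega) (by omega) le_rfl)

end Sample

section TwoSamples

variable {μ : Measure ℝ} [IsProbabilityMeasure μ] {n : ℕ}

theorem integral_prod_ostat_sub (hμ : ∀ᵐ x ∂μ, x ∈ Icc (0 : ℝ) 1) (hn : 2 ≤ n) :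
    ∫ ω, (ostat ω.1 n - ostat ω.2 (n - 1))
        ∂(Measure.pi fun _ : Fin n => μ).prod (Measure.pi fun _ : Fin n => μ)
      = ∫ v, (ostat v n - ostat v (n - 1)) ∂Measure.pi fun _ : Fin n => μ := by
  have hmax := integrable_ostat hμ (n := n) (k := n) (by omega) le_rfl
  have hsecond := integrable_ostat hμ (n := n) (k := n - 1) (by omega) (by omega)
  rw [integral_sub (hmax.comp_fst _) (hsecond.comp_snd _), integral_fun_fst (fun v => ostat v n),
    integral_fun_snd (fun v => ostat v (n - 1)), integral_sub hmax hsecond]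
  simp

theorem setIntegral_ostat_sub_pos (hμ : ∀ᵐ x ∂μ, x ∈ Icc (0 : ℝ) 1) {b : ℝ → ℝ}
    (hb : Measurable b) {T : ℝ} (hbT : ∀ x, 0 ≤ x → b x ≤ T) (hn : 2 ≤ n) {a x : ℝ}
    (h : n * μ.real (Iic T) ^ (n - 1) < (x - a) * μ.real (Ioi x) * μ.real (Iic a) ^ (n - 1)) :
    0 < ∫ ω in {ω : (Fin n → ℝ) × (Fin n → ℝ) | b (ostat ω.1 n) < ostat ω.2 (n - 1)},
        (ostat ω.1 n - ostat ω.2 (n - 1))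
        ∂(Measure.pi fun _ : Fin n => μ).prod (Measure.pi fun _ : Fin n => μ) := by
  set P := Measure.pi fun _ : Fin n => μ
  set G := {ω : (Fin n → ℝ) × (Fin n → ℝ) | b (ostat ω.1 n) < ostat ω.2 (n - 1)}
  have hmax01 : ∀ᵐ ω ∂P.prod P, ostat ω.1 n ∈ Icc 0 1 :=
    Measure.quasiMeasurePreserving_fst.ae (ae_ostat_mem hμ (by omega) le_rfl)
  have hsecond01 : ∀ᵐ ω ∂P.prod P, ostat ω.2 (n - 1) ∈ Icc 0 1 :=
    Measure.quasiMeasurePreserving_snd.ae (ae_ostat_mem hμ (by omega) (by omega))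
  have hG : MeasurableSet G :=
    measurableSet_lt (hb.comp ((measurable_ostat (by omega) le_rfl).comp measurable_fst))
      ((measurable_ostat (by omega) (by omega)).comp measurable_snd)
  have hint : Integrable (fun ω => ostat ω.1 n - ostat ω.2 (n - 1)) (P.prod P) :=
    ((integrable_ostat hμ (by omega) le_rfl).comp_fst _).sub
      ((integrable_ostat hμ (by omega) (by omega)).comp_snd _)
  have hle_one : ∀ᵐ ω ∂P.prod P, ostat ω.1 n - ostat ω.2 (n - 1) ≤ 1 := by
    filter_upwards [hmax01, hsecond01] with ω h1 h2
    linarith [h1.2, h2.1]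
  have hcompl : (P.prod P).real Gᶜ ≤ P.real {v | ostat v (n - 1) ≤ T} := by
    have hcyl : (P.prod P).real (univ ×ˢ {v | ostat v (n - 1) ≤ T})
        = P.real {v | ostat v (n - 1) ≤ T} := by
      simp [measureReal_def, Measure.prod_prod]
    refine hcyl ▸ ENNReal.toReal_mono (measure_ne_top _ _) (measure_mono_ae ?_)
    filter_upwards [hmax01] with ω hω (hωG : ¬ b (ostat ω.1 n) < ostat ω.2 (n - 1))
    exact ⟨mem_univ _, (not_lt.mp hωG).trans (hbT _ hω.1)⟩
  calc 0 < (x - a) * μ.real (Ioi x) * μ.real (Iic a) ^ (n - 1) - n * μ.real (Iic T) ^ (n - 1) :=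
        sub_pos.mpr h
    _ ≤ ∫ ω, (ostat ω.1 n - ostat ω.2 (n - 1)) ∂P.prod P - (P.prod P).real Gᶜ := by
        rw [integral_prod_ostat_sub hμ hn]
        exact sub_le_sub (mul_measureReal_le_integral_ostat_sub hμ hn)
          (hcompl.trans (measureReal_ostat_sub_one_le_le hn T))
    _ ≤ ∫ ω in G, (ostat ω.1 n - ostat ω.2 (n - 1)) ∂P.prod P :=
        sub_measureReal_compl_le_setIntegral hG hint hle_one

end TwoSamples

theorem rooney_rule_bounded_distributions_general
    (μ : Measure ℝ) [IsProbabilityMeasure μ] (f : ℝ → ℝ)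
    (hf : Continuous f)
    (hsupp : ∀ x, x ∉ Set.Icc (0 : ℝ) 1 → f x = 0)
    (hμ : μ = MeasureTheory.volume.withDensity fun x => ENNReal.ofReal (f x))
    (hsup : sSup {x | 0 < f x} = 1)
    (T : ℝ) (hT : T < 1)
    (b : ℝ → ℝ) (hb : Measurable b) (hbT : ∀ x, 0 ≤ x → b x ≤ T) :
    ∃ N : ℕ, ∀ n : ℕ, N ≤ n →
      0 < ((Measure.pi fun _ : Fin n => μ).prod (Measure.pi fun _ : Fin n => μ))
          {ω : (Fin n → ℝ) × (Fin n → ℝ) | b (ostat ω.1 n) < ostat ω.2 (n - 1)} ∧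
      0 < ∫ ω in {ω : (Fin n → ℝ) × (Fin n → ℝ) | b (ostat ω.1 n) < ostat ω.2 (n - 1)},
            (ostat ω.1 n - ostat ω.2 (n - 1))
          ∂((Measure.pi fun _ : Fin n => μ).prod (Measure.pi fun _ : Fin n => μ)) := by
  obtain ⟨z, ⟨hTz, hz1⟩, hfz⟩ := exists_mem_Ioo_pos_of_sSup_eq_one hf hsupp hsup hT
  set a := (z + 1) / 2 with ha
  set x := (z + 3) / 4 with hx
  obtain ⟨w, ⟨hxw, -⟩, hfw⟩ := exists_mem_Ioo_pos_of_sSup_eq_one hf hsupp hsup (y := x)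
    (by linarith)
  have hμ01 : ∀ᵐ t ∂μ, t ∈ Icc (0 : ℝ) 1 := hμ ▸ ae_withDensity_ofReal_mem _ hf.measurable hsupp
  have hqp : μ.real (Iic T) < μ.real (Iic a) := measureReal_Iic_lt_of_measure_Ioo_pos <|
    hμ ▸ withDensity_ofReal_pos _ hf isOpen_Ioo (⟨hTz, by linarith⟩ : z ∈ Ioo T a) hfz
  have hc : 0 < (x - a) * μ.real (Ioi x) := by
    refine mul_pos (by linarith) (ENNReal.toReal_pos ?_ (measure_ne_top _ _))
    exact (hμ ▸ withDensity_ofReal_pos _ hf isOpen_Ioi hxw hfw).ne'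
  obtain ⟨N, hN⟩ := eventually_atTop.mp <|
    (eventually_natCast_mul_pow_lt measureReal_nonneg hqp hc).and (eventually_ge_atTop 2)
  refine ⟨N, fun n hn => ?_⟩
  have hpos := setIntegral_ostat_sub_pos hμ01 hb hbT (hN n hn).2 (hN n hn).1
  exact ⟨measure_pos_of_setIntegral_pos hpos, hpos⟩

/-- For any bounded distribution with continuous density supported in `[0,1]`
whose support has supremum `1`, and any bias function `b` with `b(x) ≤ T < 1`
for all `x ≥ 0`, the Rooney Rule produces a positive expected change in
utility for all sufficiently large `n`: the event `{b(X_{(n:n)}) < Y_{(n-1:n)}}`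
has positive probability and `E[(X_{(n:n)} − Y_{(n-1:n)})·1_G] > 0`. -/
theorem rooney_rule_bounded_distributions
    (μ : Measure ℝ) [IsProbabilityMeasure μ] (f : ℝ → ℝ)
    (hf : Continuous f) (hf0 : ∀ x, 0 ≤ f x)
    (hsupp : ∀ x, x ∉ Set.Icc (0 : ℝ) 1 → f x = 0)
    (hμ : μ = MeasureTheory.volume.withDensity fun x => ENNReal.ofReal (f x))
    (hsup : sSup {x | 0 < f x} = 1)
    (T : ℝ) (hT : T < 1)
    (b : ℝ → ℝ) (hb : Measurable b) (hbT : ∀ x, 0 ≤ x → b x ≤ T) :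
    ∃ N : ℕ, ∀ n : ℕ, N ≤ n →
      0 < ((Measure.pi fun _ : Fin n => μ).prod (Measure.pi fun _ : Fin n => μ))
          {ω : (Fin n → ℝ) × (Fin n → ℝ) | b (ostat ω.1 n) < ostat ω.2 (n - 1)} ∧
      0 < ∫ ω in {ω : (Fin n → ℝ) × (Fin n → ℝ) | b (ostat ω.1 n) < ostat ω.2 (n - 1)},
            (ostat ω.1 n - ostat ω.2 (n - 1))
          ∂((Measure.pi fun _ : Fin n => μ).prod (Measure.pi fun _ : Fin n => μ)) :=
  rooney_rule_bounded_distributions_general μ f hf hsupp hμ hsup T hT b hb hbT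
end

section
/- Let X and Y be independent random variables, each uniformly distributed on the four-element set {1, 5, 9, 13}. Then E[X | X > 2Y] = 10 and E[X | X > 3Y] = 9; in particular, E[X | X > 3Y] < E[X | X > 2Y], so the function β ↦ E[X | X > βY] is not monotonically increasing in β. -/
/-!
`unifFour.prod unifFour` is `1/16` times the counting measure on the sixteen points of
`{1, 5, 9, 13}²`, and the factor `1/16` cancels in the ratio, so each conditional expectation is
the average of `x` over the points `(x, y)` of the event: `(5 + 9 + 13 + 13) / 4 = 10` for
`x > 2y` and `(5 + 9 + 13) / 3 = 9` for `x > 3y`. Passing to the stronger filter drops `(13, 5)`,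
the point with the largest `x`.
-/

open MeasureTheory

/-- The uniform distribution on the four-element set `{1, 5, 9, 13}`. -/
noncomputable def unifFour : Measure ℝ :=
  (4 : ENNReal)⁻¹ •
    (Measure.dirac 1 + Measure.dirac 5 + Measure.dirac 9 + Measure.dirac 13)

open Finset ENNReal

namespace MeasureTheory

theorem setIntegral_div_toReal_smul_measure {α : Type*} [MeasurableSpace α] (μ : Measure α)
    {c : ℝ≥0∞} (hc₀ : c ≠ 0) (hc : c ≠ ∞) (A : Set α) (f : α → ℝ) :
    (∫ x in A, f x ∂(c • μ)) / ((c • μ) A).toReal = (∫ x in A, f x ∂μ) / (μ A).toReal := by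
  rw [Measure.restrict_smul, integral_smul_measure, Measure.smul_apply, smul_eq_mul, smul_eq_mul,
    toReal_mul, mul_div_mul_left _ _ (toReal_ne_zero.2 ⟨hc₀, hc⟩)]

namespace Measure

variable {α β : Type*} [MeasurableSpace α] [MeasurableSpace β]

theorem finsetSum_prod {ι : Type*} (s : Finset ι) (μ : ι → Measure α)
    [∀ i, IsFiniteMeasure (μ i)] (ν : Measure β) [SFinite ν] :
    (∑ i ∈ s, μ i).prod ν = ∑ i ∈ s, (μ i).prod ν := by
  classical
  induction s using Finset.induction_on with
  | empty => simp
  | insert i s hi ih => rw [sum_insert hi, sum_insert hi, add_prod, ih]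

theorem prod_finsetSum {ι : Type*} (μ : Measure α) [SFinite μ] (s : Finset ι) (ν : ι → Measure β)
    [∀ i, IsFiniteMeasure (ν i)] : μ.prod (∑ i ∈ s, ν i) = ∑ i ∈ s, μ.prod (ν i) := by
  classical
  induction s using Finset.induction_on with
  | empty => simp
  | insert i s hi ih => rw [sum_insert hi, sum_insert hi, prod_add, ih]

theorem finsetSum_dirac_prod_finsetSum_dirac (s : Finset α) (t : Finset β) :
    (∑ a ∈ s, dirac a).prod (∑ b ∈ t, dirac b) = ∑ p ∈ s ×ˢ t, dirac p := by
  rw [finsetSum_prod, sum_product]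
  simp only [prod_finsetSum, dirac_prod_dirac]

variable [MeasurableSingletonClass α]

theorem restrict_finsetSum_dirac (s : Finset α) (A : Set α) [DecidablePred (· ∈ A)] :
    (∑ a ∈ s, dirac a).restrict A = ∑ a ∈ s with a ∈ A, dirac a := by
  rw [← restrictₗ_apply, _root_.map_sum, sum_filter]
  simp only [restrictₗ_apply, restrict_dirac]

theorem finsetSum_dirac_apply (s : Finset α) (A : Set α) [DecidablePred (· ∈ A)] :
    (∑ a ∈ s, dirac a) A = #{a ∈ s | a ∈ A} := by
  simp only [finsetSum_apply, dirac_apply, Set.indicator_apply, Pi.one_apply]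
  rw [sum_boole]

end Measure

variable {α E : Type*} [MeasurableSpace α] [MeasurableSingletonClass α]
  [NormedAddCommGroup E] [NormedSpace ℝ E] [CompleteSpace E]

theorem integral_finsetSum_dirac (s : Finset α) (f : α → E) :
    ∫ x, f x ∂(∑ a ∈ s, Measure.dirac a) = ∑ a ∈ s, f a := by
  rw [integral_finsetSum_measure fun a _ ↦ integrable_dirac enorm_lt_top]
  simp only [integral_dirac]

theorem setIntegral_finsetSum_dirac (s : Finset α) (A : Set α) [DecidablePred (· ∈ A)]
    (f : α → E) : ∫ x in A, f x ∂(∑ a ∈ s, Measure.dirac a) = ∑ a ∈ s with a ∈ A, f a := by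
  rw [Measure.restrict_finsetSum_dirac, integral_finsetSum_dirac]

end MeasureTheory

theorem unifFour_eq_smul_finsetSum_dirac :
    unifFour = (4 : ℝ≥0∞)⁻¹ • ∑ x ∈ ({1, 5, 9, 13} : Finset ℝ), Measure.dirac x := by
  rw [unifFour]
  norm_num [add_assoc]

theorem unifFour_prod_unifFour :
    unifFour.prod unifFour = (4 : ℝ≥0∞)⁻¹ • (4 : ℝ≥0∞)⁻¹ •
      ∑ p ∈ ({1, 5, 9, 13} : Finset ℝ) ×ˢ {1, 5, 9, 13}, Measure.dirac p := by
  rw [unifFour_eq_smul_finsetSum_dirac, Measure.prod_smul_left, Measure.prod_smul_right,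
    Measure.finsetSum_dirac_prod_finsetSum_dirac]

theorem setIntegral_fst_div_unifFour_prod_eq (P : ℝ × ℝ → Prop) [DecidablePred P] :
    (∫ p in {p | P p}, p.1 ∂(unifFour.prod unifFour)) /
        ((unifFour.prod unifFour) {p | P p}).toReal =
      (∑ p ∈ ({1, 5, 9, 13} : Finset ℝ) ×ˢ {1, 5, 9, 13} with P p, p.1) /
        #{p ∈ ({1, 5, 9, 13} : Finset ℝ) ×ˢ {1, 5, 9, 13} | P p} := by
  have hc₀ : (4 : ℝ≥0∞)⁻¹ ≠ 0 := by simp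
  have hc : (4 : ℝ≥0∞)⁻¹ ≠ ∞ := by simp
  rw [unifFour_prod_unifFour, setIntegral_div_toReal_smul_measure _ hc₀ hc,
    setIntegral_div_toReal_smul_measure _ hc₀ hc, setIntegral_finsetSum_dirac,
    Measure.finsetSum_dirac_apply, toReal_natCast]
  rfl

theorem filter_two_mul_snd_lt_fst :
    {p ∈ ({1, 5, 9, 13} : Finset ℝ) ×ˢ {1, 5, 9, 13} | 2 * p.2 < p.1} =
      {(5, 1), (9, 1), (13, 1), (13, 5)} := by
  ext ⟨x, y⟩
  simp only [mem_filter, mem_product, mem_insert, mem_singleton, Prod.mk.injEq]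
  constructor
  · rintro ⟨⟨hx | hx | hx | hx, hy | hy | hy | hy⟩, h⟩ <;> subst hx hy <;> revert h <;> norm_num
  · rintro (⟨rfl, rfl⟩ | ⟨rfl, rfl⟩ | ⟨rfl, rfl⟩ | ⟨rfl, rfl⟩) <;> norm_num

theorem filter_three_mul_snd_lt_fst :
    {p ∈ ({1, 5, 9, 13} : Finset ℝ) ×ˢ {1, 5, 9, 13} | 3 * p.2 < p.1} =
      {(5, 1), (9, 1), (13, 1)} := by
  ext ⟨x, y⟩
  simp only [mem_filter, mem_product, mem_insert, mem_singleton, Prod.mk.injEq]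
  constructor
  · rintro ⟨⟨hx | hx | hx | hx, hy | hy | hy | hy⟩, h⟩ <;> subst hx hy <;> revert h <;> norm_num
  · rintro (⟨rfl, rfl⟩ | ⟨rfl, rfl⟩ | ⟨rfl, rfl⟩) <;> norm_num

/-- For `X, Y` independent and uniform on `{1,5,9,13}`:
`E[X | X > 2Y] = 10` and `E[X | X > 3Y] = 9`, so a stronger biased filter
yields a *smaller* conditional expectation; `β ↦ E[X | X > βY]` is not
monotonically increasing. -/
theorem conditional_expectation_nonmonotone :
    (∫ p in {p : ℝ × ℝ | 2 * p.2 < p.1}, p.1 ∂(unifFour.prod unifFour)) /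
        ((unifFour.prod unifFour) {p : ℝ × ℝ | 2 * p.2 < p.1}).toReal = 10 ∧
    (∫ p in {p : ℝ × ℝ | 3 * p.2 < p.1}, p.1 ∂(unifFour.prod unifFour)) /
        ((unifFour.prod unifFour) {p : ℝ × ℝ | 3 * p.2 < p.1}).toReal = 9 ∧
    (∫ p in {p : ℝ × ℝ | 3 * p.2 < p.1}, p.1 ∂(unifFour.prod unifFour)) /
        ((unifFour.prod unifFour) {p : ℝ × ℝ | 3 * p.2 < p.1}).toReal <
      (∫ p in {p : ℝ × ℝ | 2 * p.2 < p.1}, p.1 ∂(unifFour.prod unifFour)) /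
        ((unifFour.prod unifFour) {p : ℝ × ℝ | 2 * p.2 < p.1}).toReal := by
  have h2 : (∫ p in {p : ℝ × ℝ | 2 * p.2 < p.1}, p.1 ∂(unifFour.prod unifFour)) /
      ((unifFour.prod unifFour) {p : ℝ × ℝ | 2 * p.2 < p.1}).toReal = 10 := by
    rw [setIntegral_fst_div_unifFour_prod_eq, filter_two_mul_snd_lt_fst]
    norm_num
  have h3 : (∫ p in {p : ℝ × ℝ | 3 * p.2 < p.1}, p.1 ∂(unifFour.prod unifFour)) /
      ((unifFour.prod unifFour) {p : ℝ × ℝ | 3 * p.2 < p.1}).toReal = 9 := by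
    rw [setIntegral_fst_div_unifFour_prod_eq, filter_three_mul_snd_lt_fst]
    norm_num
  exact ⟨h2, h3, by rw [h2, h3]; norm_num⟩
end

section
/- Fix δ > 0 and let m ≥ 1 be an integer. Then ∫₁^∞ x · (1+δ)·m·(1 − x^{-(1+δ)})^{m−1}·x^{-(2+δ)} dx = Γ(m+1)·Γ(δ/(1+δ)) / Γ(m + δ/(1+δ)). Moreover this quantity is at least Γ(δ/(1+δ))·m^{1/(1+δ)}, and there exist a > 0 and m₀ such that for all m ≥ m₀ it is at most (1 + a(ln m)²/m)·Γ(δ/(1+δ))·m^{1/(1+δ)}. -/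
/-!
Substituting `u = x ^ (-(1 + δ))` turns the integral into `m · B(δ / (1 + δ), m)`.
Both bounds are Gautschi's inequality
`x ^ (1 - t) ≤ Γ(x + 1) / Γ(x + t) ≤ (x + t) ^ (1 - t)` for `0 < t < 1`, a consequence of the
log-convexity of `Γ`. For the upper bound, `(m + 1) ^ s ≤ (1 + 1 / m) m ^ s` and
`1 ≤ (log m) ^ 2` once `m ≥ 3`, so `a = 1` works.
-/

open MeasureTheory Real Set

theorem image_rpow_neg_Ioi_one {p : ℝ} (hp : 0 < p) : (· ^ (-p)) '' Ioi (1 : ℝ) = Ioo 0 1 := by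
  ext u
  constructor
  · rintro ⟨x, hx, rfl⟩
    exact ⟨rpow_pos_of_pos (zero_lt_one.trans hx) _,
      rpow_lt_one_of_one_lt_of_neg hx (by linarith)⟩
  · rintro ⟨hu0, hu1⟩
    refine ⟨u ^ (-p⁻¹), one_lt_rpow_of_pos_of_lt_one_of_neg hu0 hu1 (by simpa using hp), ?_⟩
    simp [← rpow_mul hu0.le, hp.ne']

theorem integral_Ioi_one_comp_rpow_neg {E : Type*} [NormedAddCommGroup E] [NormedSpace ℝ E]
    (g : ℝ → E) {p : ℝ} (hp : 0 < p) :
    ∫ x in Ioi 1, (p * x ^ (-p - 1)) • g (x ^ (-p)) = ∫ u in Ioo 0 1, g u := by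
  rw [← image_rpow_neg_Ioi_one hp, integral_image_eq_integral_abs_deriv_smul measurableSet_Ioi
    (fun x hx => (hasDerivAt_rpow_const (Or.inl (zero_lt_one.trans hx).ne')).hasDerivWithinAt)
    ((rpow_left_injOn (neg_ne_zero.2 hp.ne')).mono fun x (hx : 1 < x) => (zero_lt_one.trans hx).le)]
  refine setIntegral_congr_fun measurableSet_Ioi fun x hx => ?_
  rw [abs_mul, abs_neg, abs_of_pos hp, abs_of_pos (rpow_pos_of_pos (zero_lt_one.trans hx) _)]

theorem Real.integral_Ioo_rpow_mul_one_sub_rpow {u v : ℝ} (hu : 0 < u) (hv : 0 < v) :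
    ∫ x in Ioo (0 : ℝ) 1, x ^ (u - 1) * (1 - x) ^ (v - 1) =
      Gamma u * Gamma v / Gamma (u + v) := by
  have hB := Complex.betaIntegral_eq_Gamma_mul_div u v (by simpa) (by simpa)
  rw [Complex.betaIntegral, intervalIntegral.integral_of_le zero_le_one, ← Complex.ofReal_add,
    Complex.Gamma_ofReal, Complex.Gamma_ofReal, Complex.Gamma_ofReal] at hB
  rw [← integral_Ioc_eq_integral_Ioo]
  apply Complex.ofReal_injective
  push_cast [← integral_complex_ofReal, ← hB]
  refine setIntegral_congr_fun measurableSet_Ioc fun x hx => ?_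
  rw [Complex.ofReal_cpow hx.1.le, Complex.ofReal_cpow (by linarith [hx.2])]
  push_cast
  ring

theorem Real.rpow_mul_Gamma_add_le_Gamma_add_one {x t : ℝ} (hx : 0 < x) (ht0 : 0 < t)
    (ht1 : t < 1) : x ^ (1 - t) * Gamma (x + t) ≤ Gamma (x + 1) := by
  have hconv := Gamma_mul_add_mul_le_rpow_Gamma_mul_rpow_Gamma (s := x) (t := x + 1)
    hx (by linarith) (sub_pos.2 ht1) ht0 (by ring)
  rw [show (1 - t) * x + t * (x + 1) = x + t by ring] at hconv
  calc x ^ (1 - t) * Gamma (x + t)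
      ≤ x ^ (1 - t) * (Gamma x ^ (1 - t) * Gamma (x + 1) ^ t) := by gcongr
    _ = (x * Gamma x) ^ (1 - t) * Gamma (x + 1) ^ t := by
        rw [mul_rpow hx.le (Gamma_pos_of_pos hx).le]; ring
    _ = Gamma (x + 1) := by
        rw [← Gamma_add_one hx.ne', ← rpow_add (Gamma_pos_of_pos (by linarith)), sub_add_cancel,
          rpow_one]

theorem Real.Gamma_add_one_le_rpow_mul_Gamma_add {x t : ℝ} (hxt : 0 < x + t) (ht0 : 0 < t)
    (ht1 : t < 1) : Gamma (x + 1) ≤ (x + t) ^ (1 - t) * Gamma (x + t) := by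
  have hconv := Gamma_mul_add_mul_le_rpow_Gamma_mul_rpow_Gamma (s := x + t) (t := x + t + 1)
    hxt (by linarith) ht0 (sub_pos.2 ht1) (by ring)
  rw [show t * (x + t) + (1 - t) * (x + t + 1) = x + 1 by ring,
    Gamma_add_one hxt.ne', mul_rpow hxt.le (Gamma_pos_of_pos hxt).le] at hconv
  calc Gamma (x + 1)
      ≤ Gamma (x + t) ^ t * ((x + t) ^ (1 - t) * Gamma (x + t) ^ (1 - t)) := hconv
    _ = (x + t) ^ (1 - t) * Gamma (x + t) := by
        rw [mul_left_comm, ← rpow_add (Gamma_pos_of_pos hxt), add_sub_cancel, rpow_one]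

theorem Real.add_one_rpow_le_one_add_inv_mul {x s : ℝ} (hx : 0 < x) (hs : s ≤ 1) :
    (x + 1) ^ s ≤ (1 + x⁻¹) * x ^ s := by
  have h1 : 1 ≤ 1 + x⁻¹ := le_add_of_nonneg_right (inv_nonneg.2 hx.le)
  calc (x + 1) ^ s = (1 + x⁻¹) ^ s * x ^ s := by
        rw [← mul_rpow (by linarith) hx.le, add_mul, inv_mul_cancel₀ hx.ne', one_mul, add_comm]
    _ ≤ (1 + x⁻¹) * x ^ s := by gcongr; exact rpow_le_self_of_one_le h1 hs

theorem Real.one_le_log_sq {x : ℝ} (hx : 3 ≤ x) : 1 ≤ log x ^ 2 := by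
  have : 1 ≤ log x := by
    rw [le_log_iff_exp_le (by linarith)]
    linarith [exp_one_lt_three]
  exact one_le_pow₀ this

noncomputable def powerLawExpectedMax (δ : ℝ) (m : ℕ) : ℝ :=
  ∫ x in Ioi (1 : ℝ), x * ((1 + δ) * m * (1 - x ^ (-(1 + δ))) ^ (m - 1) * x ^ (-(2 + δ)))

theorem powerLawExpectedMax_eq {δ : ℝ} (hδ : 0 < δ) {m : ℕ} (hm : 1 ≤ m) :
    powerLawExpectedMax δ m =
      Gamma (m + 1) * Gamma (δ / (1 + δ)) / Gamma (m + δ / (1 + δ)) := by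
  set t := δ / (1 + δ)
  have ht : 0 < t := by positivity
  have hexp : -(1 + δ) * (t - 1) = 1 := by
    simp only [t]; field_simp; ring
  have hintegrand : ∀ x ∈ Ioi (1 : ℝ),
      x * ((1 + δ) * m * (1 - x ^ (-(1 + δ))) ^ (m - 1) * x ^ (-(2 + δ))) =
        ((1 + δ) * x ^ (-(1 + δ) - 1)) •
          ((m : ℝ) *
            ((x ^ (-(1 + δ))) ^ (t - 1) * (1 - x ^ (-(1 + δ))) ^ ((m : ℝ) - 1))) := by
    intro x hx
    rw [← rpow_mul (zero_lt_one.trans hx).le, hexp, rpow_one,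
      show (m : ℝ) - 1 = ((m - 1 : ℕ) : ℝ) by push_cast [hm]; ring, rpow_natCast,
      show -(1 + δ) - 1 = -(2 + δ) by ring, smul_eq_mul]
    ring
  rw [powerLawExpectedMax, setIntegral_congr_fun measurableSet_Ioi hintegrand,
    integral_Ioi_one_comp_rpow_neg (fun u => (m : ℝ) * (u ^ (t - 1) * (1 - u) ^ ((m : ℝ) - 1)))
      (by linarith : 0 < 1 + δ), integral_const_mul,
    integral_Ioo_rpow_mul_one_sub_rpow ht (by positivity), Gamma_add_one (by positivity),
    add_comm t]
  ring

theorem Gamma_mul_rpow_le_powerLawExpectedMax {δ : ℝ} (hδ : 0 < δ) {m : ℕ} (hm : 1 ≤ m) :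
    Gamma (δ / (1 + δ)) * (m : ℝ) ^ (1 / (1 + δ)) ≤ powerLawExpectedMax δ m := by
  set t := δ / (1 + δ)
  have ht1 : t < 1 := (div_lt_one (by linarith)).2 (by linarith)
  have hs : 1 / (1 + δ) = 1 - t := by simp only [t]; field_simp; ring
  have hm0 : (0 : ℝ) < m := by exact_mod_cast hm
  rw [powerLawExpectedMax_eq hδ hm, le_div_iff₀ (Gamma_pos_of_pos (by positivity)), hs,
    mul_assoc, mul_comm (Gamma (m + 1))]
  gcongr
  exact rpow_mul_Gamma_add_le_Gamma_add_one hm0 (by positivity) ht1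

theorem powerLawExpectedMax_le_Gamma_mul_rpow_add_one {δ : ℝ} (hδ : 0 < δ) {m : ℕ}
    (hm : 1 ≤ m) :
    powerLawExpectedMax δ m ≤ Gamma (δ / (1 + δ)) * ((m : ℝ) + 1) ^ (1 / (1 + δ)) := by
  set t := δ / (1 + δ)
  have ht0 : 0 < t := by positivity
  have ht1 : t < 1 := (div_lt_one (by linarith)).2 (by linarith)
  have hs : 1 / (1 + δ) = 1 - t := by simp only [t]; field_simp; ring
  have hmt : (0 : ℝ) < m + t := by positivity
  rw [powerLawExpectedMax_eq hδ hm, div_le_iff₀ (Gamma_pos_of_pos hmt), hs, mul_assoc,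
    mul_comm (Gamma (m + 1))]
  gcongr
  calc Gamma (m + 1) ≤ ((m : ℝ) + t) ^ (1 - t) * Gamma (m + t) :=
        Gamma_add_one_le_rpow_mul_Gamma_add hmt ht0 ht1
    _ ≤ ((m : ℝ) + 1) ^ (1 - t) * Gamma (m + t) := by gcongr

theorem powerLawExpectedMax_le {δ : ℝ} (hδ : 0 < δ) {m : ℕ} (hm : 3 ≤ m) :
    powerLawExpectedMax δ m ≤
      (1 + log m ^ 2 / m) * (Gamma (δ / (1 + δ)) * (m : ℝ) ^ (1 / (1 + δ))) := by
  have hm0 : (0 : ℝ) < m := by positivity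
  have h3 : (3 : ℝ) ≤ m := by exact_mod_cast hm
  calc powerLawExpectedMax δ m
      ≤ Gamma (δ / (1 + δ)) * ((m : ℝ) + 1) ^ (1 / (1 + δ)) :=
        powerLawExpectedMax_le_Gamma_mul_rpow_add_one hδ (by omega)
    _ ≤ Gamma (δ / (1 + δ)) * ((1 + (m : ℝ)⁻¹) * (m : ℝ) ^ (1 / (1 + δ))) := by
        gcongr
        exact add_one_rpow_le_one_add_inv_mul hm0 ((div_le_one (by linarith)).2 (by linarith))
    _ ≤ Gamma (δ / (1 + δ)) * ((1 + log m ^ 2 / m) * (m : ℝ) ^ (1 / (1 + δ))) := by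
        gcongr
        rw [inv_eq_one_div]
        gcongr
        exact one_le_log_sq h3
    _ = (1 + log m ^ 2 / m) * (Gamma (δ / (1 + δ)) * (m : ℝ) ^ (1 / (1 + δ))) := by ring

/-- The expected maximum of `m` i.i.d. power law samples:
`E[Z_{(m:m)}] = Γ(m+1)Γ(δ/(1+δ))/Γ(m + δ/(1+δ))`, which is at least
`Γ(δ/(1+δ)) m^{1/(1+δ)}` and asymptotically at most
`(1 + O((ln m)²/m))·Γ(δ/(1+δ)) m^{1/(1+δ)}`. -/
theorem expected_max_power_law (δ : ℝ) (hδ : 0 < δ) :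
    (∀ m : ℕ, 1 ≤ m →
      (∫ x in Set.Ioi (1 : ℝ),
          x * ((1 + δ) * m * (1 - x ^ (-(1 + δ))) ^ (m - 1) * x ^ (-(2 + δ)))) =
        Real.Gamma ((m : ℝ) + 1) * Real.Gamma (δ / (1 + δ)) /
          Real.Gamma ((m : ℝ) + δ / (1 + δ))) ∧
    (∀ m : ℕ, 1 ≤ m →
      Real.Gamma (δ / (1 + δ)) * (m : ℝ) ^ (1 / (1 + δ)) ≤
        ∫ x in Set.Ioi (1 : ℝ),
          x * ((1 + δ) * m * (1 - x ^ (-(1 + δ))) ^ (m - 1) * x ^ (-(2 + δ)))) ∧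
    ∃ a : ℝ, 0 < a ∧ ∃ m₀ : ℕ, ∀ m : ℕ, m₀ ≤ m →
      (∫ x in Set.Ioi (1 : ℝ),
          x * ((1 + δ) * m * (1 - x ^ (-(1 + δ))) ^ (m - 1) * x ^ (-(2 + δ)))) ≤
        (1 + a * (Real.log m) ^ 2 / m) *
          (Real.Gamma (δ / (1 + δ)) * (m : ℝ) ^ (1 / (1 + δ))) := by
  refine ⟨fun m hm => powerLawExpectedMax_eq hδ hm,
    fun m hm => Gamma_mul_rpow_le_powerLawExpectedMax hδ hm, 1, one_pos, 3, fun m hm => ?_⟩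
  rw [one_mul]
  exact powerLawExpectedMax_le hδ hm
end

section
/- Fix δ > 0 and integers m ≥ 2 and k with 1 ≤ k ≤ m − 1. Then ∫₁^∞ x·f_{(m−k:m)}(x) dx = (1 − 1/(k(1+δ)))·∫₁^∞ x·f_{(m−k+1:m)}(x) dx, where f_{(p:m)}(x) = (1+δ)(m−p+1)·C(m,p−1)·(1−x^{-(1+δ)})^{p−1}·(x^{-(1+δ)})^{m−p+1}·x^{-1} for x ≥ 1. That is, the expectation of the (k+1)-st largest of m i.i.d. power-law samples equals (1 − 1/(k(1+δ))) times the expectation of the k-th largest. -/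
/-!
With `a = 1 + δ` and the tail probability `u = x^{-a}`, the integrand `x f_{(p:m)}(x)` is a
multiple of `(1 - u)^{p-1} u^{m-p+1}`. Differentiating `(1 - u)^{n+1} x^{1-ak}`, which vanishes
at `1` and at `∞` when `ak > 1`, and integrating over `(1, ∞)` relates the integrals of
`(1 - u)^n u^{k+1}` and `(1 - u)^{n+1} u^k`; the identity
`(k + 1) C(m, m-k-1) = (m - k) C(m, m-k)` matches the remaining constants.
-/

open MeasureTheory Real Finset

noncomputable def plKernel (a : ℝ) (q r : ℕ) (x : ℝ) : ℝ :=
  (1 - x ^ (-a)) ^ q * (x ^ (-a)) ^ r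

lemma continuousOn_plKernel (a : ℝ) (q r : ℕ) : ContinuousOn (plKernel a q r) (Set.Ioi 0) := by
  have h : ContinuousOn (fun x : ℝ => x ^ (-a)) (Set.Ioi 0) := fun x hx =>
    (continuousAt_rpow_const x _ (Or.inl (ne_of_gt hx))).continuousWithinAt
  exact ((continuousOn_const.sub h).pow q).mul (h.pow r)

lemma plKernel_nonneg_le {a : ℝ} (ha : 0 ≤ a) (q r : ℕ) {x : ℝ} (hx : 1 ≤ x) :
    0 ≤ plKernel a q r x ∧ plKernel a q r x ≤ x ^ (-(a * r)) := by
  have hx0 : 0 < x := by linarith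
  have hu0 : 0 ≤ x ^ (-a) := rpow_nonneg hx0.le _
  have hu1 : x ^ (-a) ≤ 1 := rpow_le_one_of_one_le_of_nonpos hx (by linarith)
  have hpow : (x ^ (-a)) ^ r = x ^ (-(a * r)) := by
    rw [← rpow_natCast, ← rpow_mul hx0.le, neg_mul]
  have hq : (1 - x ^ (-a)) ^ q ≤ 1 := pow_le_one₀ (by linarith) (by linarith)
  refine ⟨by unfold plKernel; positivity, ?_⟩
  calc plKernel a q r x ≤ 1 * (x ^ (-a)) ^ r := by
        unfold plKernel; gcongr
    _ = x ^ (-(a * r)) := by rw [one_mul, hpow]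

lemma integrableOn_plKernel {a : ℝ} (q r : ℕ) (har : 1 < a * r) :
    IntegrableOn (plKernel a q r) (Set.Ioi 1) := by
  have ha : 0 ≤ a := (pos_of_mul_pos_left (by linarith) r.cast_nonneg).le
  refine (integrableOn_Ioi_rpow_of_lt (a := -(a * r)) (by linarith) one_pos).mono'
    ((continuousOn_plKernel a q r).mono (Set.Ioi_subset_Ioi zero_le_one)
      |>.aestronglyMeasurable measurableSet_Ioi) ?_
  rw [ae_restrict_iff' measurableSet_Ioi]
  filter_upwards with x hx
  obtain ⟨h0, h1⟩ := plKernel_nonneg_le ha q r (le_of_lt hx)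
  rwa [norm_of_nonneg h0]

lemma hasDerivAt_plKernel_antideriv (a : ℝ) (n k : ℕ) {x : ℝ} (hx : 0 < x) :
    HasDerivAt (fun x : ℝ => (1 - x ^ (-a)) ^ (n + 1) * x ^ (1 - a * k))
      (a * (n + 1) * plKernel a n (k + 1) x + (1 - a * k) * plKernel a (n + 1) k x) x := by
  have hu : HasDerivAt (fun x : ℝ => 1 - x ^ (-a)) (-(-a * x ^ (-a - 1))) x :=
    (hasDerivAt_rpow_const (Or.inl hx.ne')).const_sub 1
  have hv : HasDerivAt (fun x : ℝ => x ^ (1 - a * k)) ((1 - a * k) * x ^ (1 - a * k - 1)) x :=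
    hasDerivAt_rpow_const (Or.inl hx.ne')
  refine ((hu.pow (n + 1)).mul hv).congr_deriv ?_
  have e₁ : (x ^ (-a)) ^ (k + 1) = x ^ (-a - 1) * x ^ (1 - a * k) := by
    rw [← rpow_natCast, ← rpow_mul hx.le, ← rpow_add hx]
    push_cast; ring_nf
  have e₂ : (x ^ (-a)) ^ k = x ^ (1 - a * k - 1) := by
    rw [← rpow_natCast, ← rpow_mul hx.le]
    ring_nf
  simp only [plKernel, Pi.pow_apply, e₁, e₂, Nat.add_sub_cancel]
  push_cast
  ring

lemma tendsto_plKernel_antideriv_atTop {a : ℝ} (n k : ℕ) (hak : 1 < a * k) :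
    Filter.Tendsto (fun x : ℝ => (1 - x ^ (-a)) ^ (n + 1) * x ^ (1 - a * k))
      Filter.atTop (nhds 0) := by
  have ha : 0 < a := pos_of_mul_pos_left (by linarith) k.cast_nonneg
  have h₁ : Filter.Tendsto (fun x : ℝ => (1 - x ^ (-a)) ^ (n + 1)) Filter.atTop (nhds 1) := by
    simpa using ((tendsto_const_nhds (x := (1 : ℝ))).sub (tendsto_rpow_neg_atTop ha)).pow (n + 1)
  have h₂ : Filter.Tendsto (fun x : ℝ => x ^ (1 - a * k)) Filter.atTop (nhds 0) := by
    simpa using tendsto_rpow_neg_atTop (y := a * k - 1) (by linarith)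
  simpa using h₁.mul h₂

lemma integral_plKernel_recurrence {a : ℝ} (n k : ℕ) (hak : 1 < a * k) :
    a * (n + 1) * ∫ x in Set.Ioi 1, plKernel a n (k + 1) x =
      (a * k - 1) * ∫ x in Set.Ioi 1, plKernel a (n + 1) k x := by
  have hak' : 1 < a * ↑(k + 1) := by
    push_cast
    nlinarith [(Nat.cast_nonneg k : (0 : ℝ) ≤ k)]
  have hint₁ := (integrableOn_plKernel n (k + 1) hak').const_mul (a * (n + 1))
  have hint₂ := (integrableOn_plKernel (n + 1) k hak).const_mul (1 - a * k)
  have hftc := integral_Ioi_of_hasDerivAt_of_tendsto'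
    (fun x hx => hasDerivAt_plKernel_antideriv a n k (lt_of_lt_of_le one_pos hx))
    (hint₁.add hint₂) (tendsto_plKernel_antideriv_atTop n k hak)
  rw [integral_add hint₁ hint₂, integral_const_mul, integral_const_mul] at hftc
  simp only [one_rpow, sub_self, zero_pow (Nat.succ_ne_zero n), zero_mul] at hftc
  linarith

lemma setIntegral_mul_plPdf (δ : ℝ) (p m : ℕ) :
    ∫ x in Set.Ioi 1, x * plPdf δ p m x =
      (1 + δ) * ((m : ℝ) - p + 1) * (m.choose (p - 1) : ℝ) *
        ∫ x in Set.Ioi 1, plKernel (1 + δ) (p - 1) (m - p + 1) x := by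
  rw [← integral_const_mul]
  refine setIntegral_congr_fun measurableSet_Ioi fun x (hx : 1 < x) => ?_
  have hx0 : x ≠ 0 := by linarith
  simp only [plPdf, plKernel, if_pos hx.le]
  field_simp

theorem expected_order_statistic_recurrence_general
    (δ : ℝ) (hδ : 0 < δ) (m k : ℕ) (hk1 : 1 ≤ k) (hk : k ≤ m - 1) :
    (∫ x in Set.Ioi (1 : ℝ), x * plPdf δ (m - k) m x) =
      (1 - 1 / ((k : ℝ) * (1 + δ))) *
        ∫ x in Set.Ioi (1 : ℝ), x * plPdf δ (m - k + 1) m x := by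
  obtain ⟨n, rfl⟩ : ∃ n, m = n + k + 1 := ⟨m - k - 1, by omega⟩
  have hp : n + k + 1 - k = n + 1 := by omega
  have hr₁ : n + k + 1 - (n + 1) + 1 = k + 1 := by omega
  have hr₂ : n + k + 1 - (n + 1 + 1) + 1 = k := by omega
  rw [hp, setIntegral_mul_plPdf, setIntegral_mul_plPdf, hr₁, hr₂, Nat.add_sub_cancel,
    Nat.add_sub_cancel]
  have hk0 : (1 : ℝ) ≤ k := by exact_mod_cast hk1
  have hkey := integral_plKernel_recurrence (a := 1 + δ) n k (by nlinarith)
  have hchoose : ((n + k + 1).choose (n + 1) : ℝ) * (n + 1) = (n + k + 1).choose n * (k + 1) := by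
    have := Nat.choose_succ_right_eq (n + k + 1) n
    rw [show n + k + 1 - n = k + 1 by omega] at this
    exact_mod_cast this
  set J₁ := ∫ x in Set.Ioi 1, plKernel (1 + δ) n (k + 1) x
  set J₂ := ∫ x in Set.Ioi 1, plKernel (1 + δ) (n + 1) k x
  field_simp
  push_cast
  linear_combination -(1 + δ) * k * J₁ * hchoose + k * ((n + k + 1).choose (n + 1) : ℝ) * hkey

/-- Recurrence for expected order statistics of the power law distribution:
the expectation of the `(k+1)`-st largest of `m` samples equals
`(1 − 1/(k(1+δ)))` times the expectation of the `k`-th largest. -/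
theorem expected_order_statistic_recurrence
    (δ : ℝ) (hδ : 0 < δ) (m k : ℕ) (hm : 2 ≤ m) (hk1 : 1 ≤ k) (hk : k ≤ m - 1) :
    (∫ x in Set.Ioi (1 : ℝ), x * plPdf δ (m - k) m x) =
      (1 - 1 / ((k : ℝ) * (1 + δ))) *
        ∫ x in Set.Ioi (1 : ℝ), x * plPdf δ (m - k + 1) m x :=
  expected_order_statistic_recurrence_general δ hδ m k hk1 hk
end
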